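/- arXiv:1312.3478 — 2 statements merged into one kernel-verified Lean document; each statement's English description precedes it below -/
import Mathlib

section
/- The factor Γ+1 in the randomization bounds is tight: for every integer Γ ≥ 1 and every ε > 0, there exists a finite directed multigraph with source s, sink t, and nonnegative arc capacities such that Z_RNI > 0, Z_RNI^Path > 0, Z_NI ≥ (Γ+1−ε)·Z_RNI, and Z_NI ≥ (Γ+1−ε)·Z_RNI^Path. -/
open scoped BigOperators

section NetworkInterdiction

variable {V E : Type} [Fintype V] [Fintype E] [DecidableEq V] [DecidableEq E]

/-- The basic assumptions on the network: the source and the sink are distinct,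
no arc enters the source, no arc leaves the sink, and capacities are nonnegative. -/
def IsNetwork (src dst : E → V) (s t : V) (u : E → ℝ) : Prop :=
  s ≠ t ∧ (∀ e, dst e ≠ s) ∧ (∀ e, src e ≠ t) ∧ (∀ e, 0 ≤ u e)

/-- Flow conservation at every node other than `s` and `t`. -/
def Conserves (src dst : E → V) (s t : V) (x : E → ℝ) : Prop :=
  ∀ v : V, v ≠ s → v ≠ t →
    ∑ e : E, (if dst e = v then x e else 0) = ∑ e : E, (if src e = v then x e else 0)

/-- `x` is an s-t-flow with respect to capacities `u`. -/
def IsFlow (src dst : E → V) (s t : V) (u : E → ℝ) (x : E → ℝ) : Prop :=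
  (∀ e, 0 ≤ x e) ∧ (∀ e, x e ≤ u e) ∧ Conserves src dst s t x

/-- The value of a flow: the total flow into the sink `t`. -/
def flowVal (dst : E → V) (t : V) (x : E → ℝ) : ℝ :=
  ∑ e : E, (if dst e = t then x e else 0)

/-- The payoff `f(μ,x)`: the maximum value of an s-t-flow `y` with `0 ≤ y_e ≤ x_e`
on the surviving arcs and `y_e = 0` on the removed arcs `μ`. -/
noncomputable def payoffF (src dst : E → V) (s t : V) (μ : Finset E) (x : E → ℝ) : ℝ :=
  sSup {z : ℝ | ∃ y : E → ℝ, (∀ e, 0 ≤ y e) ∧ (∀ e ∉ μ, y e ≤ x e) ∧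
    (∀ e ∈ μ, y e = 0) ∧ Conserves src dst s t y ∧ z = flowVal dst t y}

/-- The scenario set `Ω`: all sets of exactly `Γ` arcs. -/
def Scenarios (E : Type) [Fintype E] [DecidableEq E] (Γ : ℕ) : Finset (Finset E) :=
  Finset.univ.filter fun μ => μ.card = Γ

/-- `α` is a probability distribution on the scenario set `Ω`. -/
def IsDist (E : Type) [Fintype E] [DecidableEq E] (Γ : ℕ) (α : Finset E → ℝ) : Prop :=
  (∀ μ, 0 ≤ α μ) ∧ (∀ μ, μ ∉ Scenarios E Γ → α μ = 0) ∧
    ∑ μ ∈ Scenarios E Γ, α μ = 1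

/-- `p` is (the list of arcs of) a directed path from `s` to `t`
visiting pairwise distinct vertices. -/
def IsSTPath (src dst : E → V) (s t : V) (p : List E) : Prop :=
  p ≠ [] ∧ (∀ e ∈ p.head?, src e = s) ∧ (∀ e ∈ p.getLast?, dst e = t) ∧
  p.Chain' (fun e f => dst e = src f) ∧ (p.map src ++ [t]).Nodup

/-- The (finite) set `𝒫` of all directed s-t-paths. -/
noncomputable def stPaths (src dst : E → V) (s t : V) : Finset (List E) :=
  @Finset.filter _ (IsSTPath src dst s t) (Classical.decPred _)
    ((Finset.univ : Finset {l : List E // l.Nodup}).image Subtype.val)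

/-- `xP` is a path-based s-t-flow with respect to capacities `u`. -/
noncomputable def IsPathFlow (src dst : E → V) (s t : V) (u : E → ℝ) (xP : List E → ℝ) : Prop :=
  (∀ p, 0 ≤ xP p) ∧ (∀ p, p ∉ stPaths src dst s t → xP p = 0) ∧
  ∀ e : E, (∑ p ∈ stPaths src dst s t, if e ∈ p then xP p else 0) ≤ u e

/-- The path-based payoff `g(μ,x)`: the total flow on paths containing no removed arc. -/
noncomputable def payoffG (src dst : E → V) (s t : V) (μ : Finset E) (xP : List E → ℝ) : ℝ :=
  ∑ p ∈ stPaths src dst s t,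
    max 0 (1 - ((p.countP fun e => decide (e ∈ μ)) : ℝ)) * xP p

/-- The network interdiction value `Z_NI`. -/
noncomputable def Z_NI (src dst : E → V) (s t : V) (u : E → ℝ) (Γ : ℕ) : ℝ :=
  sInf {z : ℝ | ∃ μ ∈ Scenarios E Γ,
    z = sSup {w : ℝ | ∃ x : E → ℝ, IsFlow src dst s t u x ∧ w = payoffF src dst s t μ x}}

/-- The adaptive maximum flow value `Z_ADP`. -/
noncomputable def Z_ADP (src dst : E → V) (s t : V) (u : E → ℝ) (Γ : ℕ) : ℝ :=
  sSup {z : ℝ | ∃ x : E → ℝ, IsFlow src dst s t u x ∧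
    z = sInf {w : ℝ | ∃ μ ∈ Scenarios E Γ, w = payoffF src dst s t μ x}}

/-- The (arc-based) randomized network interdiction value `Z_RNI`. -/
noncomputable def Z_RNI (src dst : E → V) (s t : V) (u : E → ℝ) (Γ : ℕ) : ℝ :=
  sInf {z : ℝ | ∃ α : Finset E → ℝ, IsDist E Γ α ∧
    z = sSup {w : ℝ | ∃ x : E → ℝ, IsFlow src dst s t u x ∧
      w = ∑ μ ∈ Scenarios E Γ, α μ * payoffF src dst s t μ x}}

/-- The path-based network interdiction value `Z_NI^Path`. -/
noncomputable def Z_NIPath (src dst : E → V) (s t : V) (u : E → ℝ) (Γ : ℕ) : ℝ :=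
  sInf {z : ℝ | ∃ μ ∈ Scenarios E Γ,
    z = sSup {w : ℝ | ∃ xP : List E → ℝ, IsPathFlow src dst s t u xP ∧
      w = payoffG src dst s t μ xP}}

/-- The path-based adaptive maximum flow value `Z_ADP^Path`. -/
noncomputable def Z_ADPPath (src dst : E → V) (s t : V) (u : E → ℝ) (Γ : ℕ) : ℝ :=
  sSup {z : ℝ | ∃ xP : List E → ℝ, IsPathFlow src dst s t u xP ∧
    z = sInf {w : ℝ | ∃ μ ∈ Scenarios E Γ, w = payoffG src dst s t μ xP}}

/-- The path-based randomized network interdiction value `Z_RNI^Path`. -/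
noncomputable def Z_RNIPath (src dst : E → V) (s t : V) (u : E → ℝ) (Γ : ℕ) : ℝ :=
  sInf {z : ℝ | ∃ α : Finset E → ℝ, IsDist E Γ α ∧
    z = sSup {w : ℝ | ∃ xP : List E → ℝ, IsPathFlow src dst s t u xP ∧
      w = ∑ μ ∈ Scenarios E Γ, α μ * payoffG src dst s t μ xP}}

/-- The value `Z_LO(θ)` of the parametric LO model. -/
noncomputable def Z_LOAt (src dst : E → V) (s t : V) (u : E → ℝ) (Γ : ℕ) (θ : ℝ) : ℝ :=
  sSup {z : ℝ | ∃ x : E → ℝ, IsFlow src dst s t u x ∧ (∀ e, x e ≤ θ) ∧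
    z = flowVal dst t x - Γ * θ}

/-- The optimal value `Z_LO` of the LO model. -/
noncomputable def Z_LO (src dst : E → V) (s t : V) (u : E → ℝ) (Γ : ℕ) : ℝ :=
  sSup {z : ℝ | ∃ θ : ℝ, 0 ≤ θ ∧ z = Z_LOAt src dst s t u Γ θ}

/-- `(x, θ)` is an optimal solution of the LO model. -/
noncomputable def IsLOOptimal (src dst : E → V) (s t : V) (u : E → ℝ) (Γ : ℕ)
    (x : E → ℝ) (θ : ℝ) : Prop :=
  IsFlow src dst s t u x ∧ 0 ≤ θ ∧ (∀ e, x e ≤ θ) ∧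
    flowVal dst t x - Γ * θ = Z_LO src dst s t u Γ

/-- The set `δ⁺(S)` of arcs going from `S` to its complement. -/
def cutArcs (src dst : E → V) (S : Finset V) : Finset E :=
  Finset.univ.filter fun e => src e ∈ S ∧ dst e ∉ S

/-- The capacity `Cap(S,θ)` of a cut with respect to the truncated capacities `u(θ)`. -/
noncomputable def cutCap (src dst : E → V) (u : E → ℝ) (S : Finset V) (θ : ℝ) : ℝ :=
  ∑ e ∈ cutArcs src dst S, min (u e) θ

/-- The set `A(S,θ)` of arcs in `δ⁺(S)` with `θ ≤ u_e`. -/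
noncomputable def cutA (src dst : E → V) (u : E → ℝ) (S : Finset V) (θ : ℝ) : Finset E :=
  @Finset.filter _ (fun e => θ ≤ u e) (Classical.decPred _) (cutArcs src dst S)

/-- The set `B(S,θ)` of arcs in `δ⁺(S)` with `θ < u_e`. -/
noncomputable def cutB (src dst : E → V) (u : E → ℝ) (S : Finset V) (θ : ℝ) : Finset E :=
  @Finset.filter _ (fun e => θ < u e) (Classical.decPred _) (cutArcs src dst S)

/-- A directed cycle (closed directed walk) all of whose arcs lie in `S`. -/
def HasCycleIn (src dst : E → V) (S : Set E) : Prop :=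
  ∃ c : List E, c ≠ [] ∧ (∀ e ∈ c, e ∈ S) ∧ c.Chain' (fun e f => dst e = src f) ∧
    ∀ e ∈ c.getLast?, ∀ f ∈ c.head?, dst e = src f

namespace TightAux

variable (Γ K : ℕ)

def M : ℕ := (Γ + 1) + (K + Γ)

def asrc : Fin (M Γ K) → Fin 3 := fun e => if (e : ℕ) < Γ + 1 then 0 else 1
def adst : Fin (M Γ K) → Fin 3 := fun e => if (e : ℕ) < Γ + 1 then 1 else 2
noncomputable def au : Fin (M Γ K) → ℝ := fun e => if (e : ℕ) < Γ + 1 then 1 else (K : ℝ)⁻¹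

def Aset : Finset (Fin (M Γ K)) := Finset.univ.filter fun e => (e : ℕ) < Γ + 1
def Bset : Finset (Fin (M Γ K)) := Finset.univ.filter fun e => ¬ (e : ℕ) < Γ + 1

def aArc (i : Fin (Γ + 1)) : Fin (M Γ K) := ⟨i.1, by have := i.2; simp only [M]; omega⟩
def bArc (k : Fin (K + Γ)) : Fin (M Γ K) := ⟨Γ + 1 + k.1, by have := k.2; simp only [M]; omega⟩

variable {Γ K}

lemma mem_Aset {e : Fin (M Γ K)} : e ∈ Aset Γ K ↔ (e : ℕ) < Γ + 1 := by simp [Aset]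
lemma mem_Bset {e : Fin (M Γ K)} : e ∈ Bset Γ K ↔ ¬ (e : ℕ) < Γ + 1 := by simp [Bset]

lemma aArc_injective : Function.Injective (aArc Γ K) := by
  intro i j h
  have : (aArc Γ K i).1 = (aArc Γ K j).1 := by rw [h]
  exact Fin.ext this

lemma bArc_injective : Function.Injective (bArc Γ K) := by
  intro i j h
  have : (bArc Γ K i).1 = (bArc Γ K j).1 := by rw [h]
  simp only [bArc] at this
  exact Fin.ext (by omega)

lemma Aset_eq : Aset Γ K = Finset.image (aArc Γ K) Finset.univ := by
  ext e
  simp only [mem_Aset, Finset.mem_image, Finset.mem_univ, true_and]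
  constructor
  · intro h; exact ⟨⟨e.1, h⟩, Fin.ext rfl⟩
  · rintro ⟨i, rfl⟩; exact i.2

lemma Bset_eq : Bset Γ K = Finset.image (bArc Γ K) Finset.univ := by
  ext e
  simp only [mem_Bset, Finset.mem_image, Finset.mem_univ, true_and, not_lt]
  constructor
  · intro h
    have he := e.2
    simp only [M] at he
    exact ⟨⟨e.1 - (Γ + 1), by omega⟩, Fin.ext (by simp [bArc]; omega)⟩
  · rintro ⟨k, rfl⟩; simp [bArc]

lemma card_Aset : (Aset Γ K).card = Γ + 1 := by
  rw [Aset_eq, Finset.card_image_of_injective _ aArc_injective, Finset.card_univ,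
    Fintype.card_fin]

lemma card_Bset : (Bset Γ K).card = K + Γ := by
  rw [Bset_eq, Finset.card_image_of_injective _ bArc_injective, Finset.card_univ,
    Fintype.card_fin]

lemma aArc_mem_Aset (i : Fin (Γ + 1)) : aArc Γ K i ∈ Aset Γ K := by
  simp [mem_Aset, aArc, i.2]

lemma bArc_mem_Bset (k : Fin (K + Γ)) : bArc Γ K k ∈ Bset Γ K := by
  simp [mem_Bset, bArc]; omega

lemma not_mem_Bset_of_mem_Aset {e : Fin (M Γ K)} (h : e ∈ Aset Γ K) : e ∉ Bset Γ K := by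
  rw [mem_Aset] at h; rw [mem_Bset]; exact fun h' => h' h

lemma fin3_eq_one {v : Fin 3} (h0 : v ≠ 0) (h2 : v ≠ 2) : v = 1 := by
  revert h0 h2 v; decide

lemma adst_eq_one {e : Fin (M Γ K)} : adst Γ K e = 1 ↔ e ∈ Aset Γ K := by
  rw [mem_Aset]; unfold adst
  by_cases h : (e : ℕ) < Γ + 1 <;> simp [h]

lemma adst_eq_two {e : Fin (M Γ K)} : adst Γ K e = 2 ↔ e ∈ Bset Γ K := by
  rw [mem_Bset]; unfold adst
  by_cases h : (e : ℕ) < Γ + 1 <;> simp [h]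

lemma asrc_eq_zero {e : Fin (M Γ K)} : asrc Γ K e = 0 ↔ e ∈ Aset Γ K := by
  rw [mem_Aset]; unfold asrc
  by_cases h : (e : ℕ) < Γ + 1 <;> simp [h]

lemma asrc_eq_one {e : Fin (M Γ K)} : asrc Γ K e = 1 ↔ e ∈ Bset Γ K := by
  rw [mem_Bset]; unfold asrc
  by_cases h : (e : ℕ) < Γ + 1 <;> simp [h]

lemma sum_dst1 (y : Fin (M Γ K) → ℝ) :
    (∑ e, if adst Γ K e = 1 then y e else 0) = ∑ e ∈ Aset Γ K, y e := by
  rw [Aset, Finset.sum_filter]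
  exact Finset.sum_congr rfl fun e _ => by
    by_cases h : (e : ℕ) < Γ + 1 <;> simp [adst, h]

lemma sum_dst2 (y : Fin (M Γ K) → ℝ) :
    (∑ e, if adst Γ K e = 2 then y e else 0) = ∑ e ∈ Bset Γ K, y e := by
  rw [Bset, Finset.sum_filter]
  exact Finset.sum_congr rfl fun e _ => by
    by_cases h : (e : ℕ) < Γ + 1 <;> simp [adst, h]

lemma sum_src1 (y : Fin (M Γ K) → ℝ) :
    (∑ e, if asrc Γ K e = 1 then y e else 0) = ∑ e ∈ Bset Γ K, y e := by
  rw [Bset, Finset.sum_filter]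
  exact Finset.sum_congr rfl fun e _ => by
    by_cases h : (e : ℕ) < Γ + 1 <;> simp [asrc, h]

lemma flowVal_eq (y : Fin (M Γ K) → ℝ) :
    flowVal (adst Γ K) 2 y = ∑ e ∈ Bset Γ K, y e := sum_dst2 y

lemma conserves_iff (y : Fin (M Γ K) → ℝ) :
    Conserves (asrc Γ K) (adst Γ K) 0 2 y ↔ ∑ e ∈ Aset Γ K, y e = ∑ e ∈ Bset Γ K, y e := by
  constructor
  · intro h
    have := h 1 (by decide) (by decide)
    rwa [sum_dst1, sum_src1] at this
  · intro h v hv0 hv2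
    rw [fin3_eq_one hv0 hv2, sum_dst1, sum_src1]
    exact h

lemma au_nonneg (e : Fin (M Γ K)) : 0 ≤ au Γ K e := by
  unfold au; split
  · norm_num
  · positivity

lemma au_Aset {e : Fin (M Γ K)} (h : e ∈ Aset Γ K) : au Γ K e = 1 := by
  rw [mem_Aset] at h; simp [au, h]

lemma au_Bset {e : Fin (M Γ K)} (h : e ∈ Bset Γ K) : au Γ K e = (K : ℝ)⁻¹ := by
  rw [mem_Bset] at h; simp [au, h]

lemma sum_au_Bset : ∑ e ∈ Bset Γ K, au Γ K e = (K + Γ : ℝ) * (K : ℝ)⁻¹ := by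
  rw [Finset.sum_congr rfl (fun e he => au_Bset he), Finset.sum_const, card_Bset]
  push_cast
  ring

lemma sum_le_on_sdiff {S μ : Finset (Fin (M Γ K))} {y x : Fin (M Γ K) → ℝ}
    (h0 : ∀ e ∈ μ, y e = 0) (hle : ∀ e ∉ μ, y e ≤ x e) :
    ∑ e ∈ S, y e ≤ ∑ e ∈ S \ μ, x e := by
  rw [← Finset.sum_filter_add_sum_filter_not S (· ∈ μ) y]
  have h1 : ∑ e ∈ S.filter (· ∈ μ), y e = 0 :=
    Finset.sum_eq_zero fun e he => h0 e (Finset.mem_filter.1 he).2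
  rw [h1, zero_add, Finset.sdiff_eq_filter]
  exact Finset.sum_le_sum fun e he => hle e (Finset.mem_filter.1 he).2

/-- The feasible-payoff set of `payoffF` for our network. -/
def pSet (Γ K : ℕ) (μ : Finset (Fin (M Γ K))) (x : Fin (M Γ K) → ℝ) : Set ℝ :=
  {z : ℝ | ∃ y : Fin (M Γ K) → ℝ, (∀ e, 0 ≤ y e) ∧ (∀ e ∉ μ, y e ≤ x e) ∧
    (∀ e ∈ μ, y e = 0) ∧ Conserves (asrc Γ K) (adst Γ K) 0 2 y ∧ z = flowVal (adst Γ K) 2 y}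

lemma payoffF_def (μ : Finset (Fin (M Γ K))) (x : Fin (M Γ K) → ℝ) :
    payoffF (asrc Γ K) (adst Γ K) 0 2 μ x = sSup (pSet Γ K μ x) := rfl

lemma pSet_le {μ : Finset (Fin (M Γ K))} {x : Fin (M Γ K) → ℝ} {z : ℝ}
    (hz : z ∈ pSet Γ K μ x) : z ≤ ∑ e ∈ Bset Γ K \ μ, x e := by
  obtain ⟨y, hy0, hyx, hyμ, hyc, rfl⟩ := hz
  rw [flowVal_eq]
  exact sum_le_on_sdiff hyμ hyx

lemma bddAbove_pSet (μ : Finset (Fin (M Γ K))) (x : Fin (M Γ K) → ℝ) :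
    BddAbove (pSet Γ K μ x) :=
  ⟨_, fun _ hz => pSet_le hz⟩

lemma zero_mem_pSet {μ : Finset (Fin (M Γ K))} {x : Fin (M Γ K) → ℝ}
    (hx : ∀ e, 0 ≤ x e) : (0 : ℝ) ∈ pSet Γ K μ x := by
  refine ⟨fun _ => 0, fun _ => le_refl 0, fun e _ => hx e, fun _ _ => rfl,
    (conserves_iff _).2 (by simp), ?_⟩
  simp [flowVal_eq]

lemma le_payoffF {μ : Finset (Fin (M Γ K))} {x : Fin (M Γ K) → ℝ}
    (y : Fin (M Γ K) → ℝ) (hy0 : ∀ e, 0 ≤ y e) (hyx : ∀ e ∉ μ, y e ≤ x e)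
    (hyμ : ∀ e ∈ μ, y e = 0) (hyc : Conserves (asrc Γ K) (adst Γ K) 0 2 y) :
    flowVal (adst Γ K) 2 y ≤ payoffF (asrc Γ K) (adst Γ K) 0 2 μ x :=
  le_csSup (bddAbove_pSet μ x) ⟨y, hy0, hyx, hyμ, hyc, rfl⟩

lemma payoffF_le_A {μ : Finset (Fin (M Γ K))} {x : Fin (M Γ K) → ℝ}
    (hx : ∀ e, 0 ≤ x e) :
    payoffF (asrc Γ K) (adst Γ K) 0 2 μ x ≤ ∑ e ∈ Aset Γ K \ μ, x e := by
  rw [payoffF_def]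
  apply csSup_le ⟨0, zero_mem_pSet hx⟩
  rintro z ⟨y, hy0, hyx, hyμ, hyc, rfl⟩
  rw [flowVal_eq, ← (conserves_iff y).1 hyc]
  exact sum_le_on_sdiff hyμ hyx

lemma payoffF_le_Bu {μ : Finset (Fin (M Γ K))} {x : Fin (M Γ K) → ℝ}
    (hx0 : ∀ e, 0 ≤ x e) (hxu : ∀ e, x e ≤ au Γ K e) :
    payoffF (asrc Γ K) (adst Γ K) 0 2 μ x ≤ (K + Γ : ℝ) * (K : ℝ)⁻¹ := by
  rw [payoffF_def]
  apply csSup_le ⟨0, zero_mem_pSet hx0⟩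
  rintro z ⟨y, hy0, hyx, hyμ, hyc, rfl⟩
  rw [flowVal_eq, ← sum_au_Bset]
  refine Finset.sum_le_sum fun e _ => ?_
  by_cases h : e ∈ μ
  · rw [hyμ e h]; exact au_nonneg e
  · exact le_trans (hyx e h) (hxu e)

lemma payoffF_nonneg {μ : Finset (Fin (M Γ K))} {x : Fin (M Γ K) → ℝ}
    (hx : ∀ e, 0 ≤ x e) : 0 ≤ payoffF (asrc Γ K) (adst Γ K) 0 2 μ x :=
  le_csSup (bddAbove_pSet μ x) (zero_mem_pSet hx)

lemma payoffF_zeroflow (μ : Finset (Fin (M Γ K))) :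
    payoffF (asrc Γ K) (adst Γ K) 0 2 μ (fun _ => 0) = 0 := by
  have hset : pSet Γ K μ (fun _ => 0) = {0} := by
    ext z
    constructor
    · rintro ⟨y, hy0, hyx, hyμ, hyc, rfl⟩
      have hy : ∀ e, y e = 0 := fun e => by
        by_cases h : e ∈ μ
        · exact hyμ e h
        · exact le_antisymm (hyx e h) (hy0 e)
      simp [flowVal_eq, hy]
    · rintro rfl
      exact zero_mem_pSet fun _ => le_refl 0
  rw [payoffF_def, hset, csSup_singleton]


variable (Γ K) in
/-- The balanced flow of value 1. -/
noncomputable def xbal : Fin (M Γ K) → ℝ :=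
  fun e => if (e : ℕ) < Γ + 1 then ((Γ : ℝ) + 1)⁻¹ else ((K : ℝ) + (Γ : ℝ))⁻¹

lemma sum_ite_subset {S T : Finset (Fin (M Γ K))} (hTS : T ⊆ S) (c : ℝ) :
    ∑ e ∈ S, (if e ∈ T then c else 0) = T.card * c := by
  rw [Finset.sum_ite_mem, Finset.inter_eq_right.mpr hTS, Finset.sum_const, nsmul_eq_mul]

lemma xbal_A {e : Fin (M Γ K)} (h : e ∈ Aset Γ K) : xbal Γ K e = ((Γ : ℝ) + 1)⁻¹ := by
  rw [mem_Aset] at h; simp [xbal, h]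

lemma xbal_B {e : Fin (M Γ K)} (h : e ∈ Bset Γ K) : xbal Γ K e = ((K : ℝ) + (Γ : ℝ))⁻¹ := by
  rw [mem_Bset] at h; simp [xbal, h]

lemma xbal_nonneg (e : Fin (M Γ K)) : 0 ≤ xbal Γ K e := by
  unfold xbal; split <;> positivity

lemma sum_xbal_A : ∑ e ∈ Aset Γ K, xbal Γ K e = 1 := by
  rw [Finset.sum_congr rfl (fun e he => xbal_A he), Finset.sum_const, card_Aset,
    nsmul_eq_mul]
  have : ((Γ : ℝ) + 1) ≠ 0 := by positivity
  push_cast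
  field_simp

lemma sum_xbal_B (hK : 1 ≤ K) : ∑ e ∈ Bset Γ K, xbal Γ K e = 1 := by
  rw [Finset.sum_congr rfl (fun e he => xbal_B he), Finset.sum_const, card_Bset,
    nsmul_eq_mul]
  have h0 : (0 : ℝ) < (K : ℝ) + (Γ : ℝ) := by
    have : (1 : ℝ) ≤ (K : ℝ) := by exact_mod_cast hK
    positivity
  push_cast
  field_simp

lemma isFlow_xbal (hK : 1 ≤ K) :
    IsFlow (asrc Γ K) (adst Γ K) 0 2 (au Γ K) (xbal Γ K) := by
  have hK0 : (0 : ℝ) < (K : ℝ) := by exact_mod_cast hK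
  refine ⟨xbal_nonneg, ?_, (conserves_iff _).2 (by rw [sum_xbal_A, sum_xbal_B hK])⟩
  intro e
  unfold xbal au
  split
  · apply inv_le_one_of_one_le₀
    have : (0 : ℝ) ≤ (Γ : ℝ) := Nat.cast_nonneg _
    linarith
  · apply inv_anti₀ hK0
    have : (0 : ℝ) ≤ (Γ : ℝ) := Nat.cast_nonneg _
    linarith

lemma flowVal_xbal (hK : 1 ≤ K) : flowVal (adst Γ K) 2 (xbal Γ K) = 1 := by
  rw [flowVal_eq, sum_xbal_B hK]

lemma card_Asdiff_pos {μ : Finset (Fin (M Γ K))} (hμ : μ.card ≤ Γ) :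
    1 ≤ (Aset Γ K \ μ).card := by
  have := Finset.le_card_sdiff μ (Aset Γ K)
  rw [card_Aset] at this
  omega

lemma card_Bsdiff_ge {μ : Finset (Fin (M Γ K))} (hμ : μ.card ≤ Γ) :
    K ≤ (Bset Γ K \ μ).card := by
  have := Finset.le_card_sdiff μ (Bset Γ K)
  rw [card_Bset] at this
  omega

variable (Γ K) in
/-- A flow of value 1 avoiding the removed arcs `μ`. -/
noncomputable def xfor (μ : Finset (Fin (M Γ K))) : Fin (M Γ K) → ℝ :=
  fun e => if e ∈ Aset Γ K \ μ then (((Aset Γ K \ μ).card : ℝ))⁻¹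
    else if e ∈ Bset Γ K \ μ then (((Bset Γ K \ μ).card : ℝ))⁻¹ else 0

lemma xfor_nonneg (μ : Finset (Fin (M Γ K))) (e : Fin (M Γ K)) : 0 ≤ xfor Γ K μ e := by
  unfold xfor; split
  · positivity
  · split
    · positivity
    · exact le_refl 0

lemma sum_xfor_A {μ : Finset (Fin (M Γ K))} (hμ : μ.card ≤ Γ) :
    ∑ e ∈ Aset Γ K, xfor Γ K μ e = 1 := by
  have hcongr : ∀ e ∈ Aset Γ K,
      xfor Γ K μ e = if e ∈ Aset Γ K \ μ then (((Aset Γ K \ μ).card : ℝ))⁻¹ else 0 := by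
    intro e he
    unfold xfor
    by_cases h1 : e ∈ Aset Γ K \ μ
    · simp [h1]
    · have h2 : e ∉ Bset Γ K \ μ := fun hc =>
        not_mem_Bset_of_mem_Aset he (Finset.mem_sdiff.1 hc).1
      simp [h1, h2]
  rw [Finset.sum_congr rfl hcongr, sum_ite_subset (Finset.sdiff_subset)]
  have h1 : (0 : ℝ) < ((Aset Γ K \ μ).card : ℝ) := by
    exact_mod_cast Nat.lt_of_lt_of_le Nat.zero_lt_one (card_Asdiff_pos hμ)
  field_simp

lemma sum_xfor_B {μ : Finset (Fin (M Γ K))} (hK : 1 ≤ K) (hμ : μ.card ≤ Γ) :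
    ∑ e ∈ Bset Γ K, xfor Γ K μ e = 1 := by
  have hcongr : ∀ e ∈ Bset Γ K,
      xfor Γ K μ e = if e ∈ Bset Γ K \ μ then (((Bset Γ K \ μ).card : ℝ))⁻¹ else 0 := by
    intro e he
    unfold xfor
    have h1 : e ∉ Aset Γ K \ μ := by
      intro hc
      exact not_mem_Bset_of_mem_Aset (Finset.mem_sdiff.1 hc).1 he
    simp [h1]
  rw [Finset.sum_congr rfl hcongr, sum_ite_subset (Finset.sdiff_subset)]
  have h1 : (0 : ℝ) < ((Bset Γ K \ μ).card : ℝ) := by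
    have := card_Bsdiff_ge (Γ := Γ) (K := K) hμ
    exact_mod_cast Nat.lt_of_lt_of_le (Nat.lt_of_lt_of_le Nat.zero_lt_one hK) this
  field_simp

lemma xfor_zero_on {μ : Finset (Fin (M Γ K))} {e : Fin (M Γ K)} (he : e ∈ μ) :
    xfor Γ K μ e = 0 := by
  unfold xfor
  have h1 : e ∉ Aset Γ K \ μ := fun hc => (Finset.mem_sdiff.1 hc).2 he
  have h2 : e ∉ Bset Γ K \ μ := fun hc => (Finset.mem_sdiff.1 hc).2 he
  simp [h1, h2]

lemma isFlow_xfor {μ : Finset (Fin (M Γ K))} (hK : 1 ≤ K) (hμ : μ.card ≤ Γ) :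
    IsFlow (asrc Γ K) (adst Γ K) 0 2 (au Γ K) (xfor Γ K μ) := by
  have hK0 : (0 : ℝ) < (K : ℝ) := by exact_mod_cast hK
  refine ⟨xfor_nonneg μ, ?_,
    (conserves_iff _).2 (by rw [sum_xfor_A hμ, sum_xfor_B hK hμ])⟩
  intro e
  unfold xfor
  split
  · next h =>
    rw [au_Aset (Finset.mem_sdiff.1 h).1]
    apply inv_le_one_of_one_le₀
    exact_mod_cast card_Asdiff_pos hμ
  · split
    · next _ h =>
      rw [au_Bset (Finset.mem_sdiff.1 h).1]
      apply inv_anti₀ hK0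
      exact_mod_cast card_Bsdiff_ge hμ
    · exact au_nonneg e

lemma flowVal_xfor {μ : Finset (Fin (M Γ K))} (hK : 1 ≤ K) (hμ : μ.card ≤ Γ) :
    flowVal (adst Γ K) 2 (xfor Γ K μ) = 1 := by
  rw [flowVal_eq, sum_xfor_B hK hμ]

lemma one_le_payoffF_xfor {μ : Finset (Fin (M Γ K))} (hK : 1 ≤ K) (hμ : μ.card ≤ Γ) :
    1 ≤ payoffF (asrc Γ K) (adst Γ K) 0 2 μ (xfor Γ K μ) := by
  have := le_payoffF (μ := μ) (x := xfor Γ K μ) (xfor Γ K μ) (xfor_nonneg μ)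
    (fun e _ => le_refl _) (fun e he => xfor_zero_on he)
    (isFlow_xfor hK hμ).2.2
  rwa [flowVal_xfor hK hμ] at this

lemma payoffF_xbal_ge {μ : Finset (Fin (M Γ K))} (hK : 1 ≤ K) (hμ : μ.card ≤ Γ) :
    ((Γ : ℝ) + 1)⁻¹ ≤ payoffF (asrc Γ K) (adst Γ K) 0 2 μ (xbal Γ K) := by
  -- pick a surviving source arc
  obtain ⟨e0, he0⟩ := Finset.card_pos.1 (Nat.lt_of_lt_of_le Nat.zero_lt_one
    (card_Asdiff_pos (K := K) hμ))
  have he0A : e0 ∈ Aset Γ K := (Finset.mem_sdiff.1 he0).1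
  have he0μ : e0 ∉ μ := (Finset.mem_sdiff.1 he0).2
  set Sb : Finset (Fin (M Γ K)) := Bset Γ K \ μ with hSb
  have hSbB : Sb ⊆ Bset Γ K := Finset.sdiff_subset
  have hSbcard : K ≤ Sb.card := card_Bsdiff_ge hμ
  have hScpos : (0 : ℝ) < (Sb.card : ℝ) := by
    exact_mod_cast Nat.lt_of_lt_of_le (Nat.lt_of_lt_of_le Nat.zero_lt_one hK) hSbcard
  set q : ℝ := ((Γ : ℝ) + 1)⁻¹ with hq
  have hq0 : 0 ≤ q := by positivity
  set y : Fin (M Γ K) → ℝ :=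
    fun e => if e = e0 then q else if e ∈ Sb then q * ((Sb.card : ℝ))⁻¹ else 0 with hy
  have hy0 : ∀ e, 0 ≤ y e := by
    intro e; rw [hy]; dsimp only
    split
    · exact hq0
    · split
      · positivity
      · exact le_refl 0
  have hsumA : ∑ e ∈ Aset Γ K, y e = q := by
    have hcongr : ∀ e ∈ Aset Γ K, y e = if e = e0 then q else 0 := by
      intro e he
      rw [hy]; dsimp only
      by_cases h : e = e0
      · simp [h]
      · have h2 : e ∉ Sb := fun hc => not_mem_Bset_of_mem_Aset he (hSbB hc)
        simp [h, h2]
    rw [Finset.sum_congr rfl hcongr, Finset.sum_ite_eq' (Aset Γ K) e0 (fun _ => q),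
      if_pos he0A]
  have hsumB : ∑ e ∈ Bset Γ K, y e = q := by
    have hcongr : ∀ e ∈ Bset Γ K, y e = if e ∈ Sb then q * ((Sb.card : ℝ))⁻¹ else 0 := by
      intro e he
      rw [hy]; dsimp only
      have h : e ≠ e0 := fun hc => not_mem_Bset_of_mem_Aset he0A (hc ▸ he)
      simp [h]
    rw [Finset.sum_congr rfl hcongr, sum_ite_subset hSbB]
    field_simp
  have hyval : flowVal (adst Γ K) 2 y = q := by rw [flowVal_eq, hsumB]
  have hcons : Conserves (asrc Γ K) (adst Γ K) 0 2 y :=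
    (conserves_iff _).2 (by rw [hsumA, hsumB])
  have hyx : ∀ e ∉ μ, y e ≤ xbal Γ K e := by
    intro e heμ
    rw [hy]; dsimp only
    by_cases h : e = e0
    · rw [if_pos h, h, xbal_A he0A]
    · rw [if_neg h]
      by_cases h2 : e ∈ Sb
      · rw [if_pos h2, xbal_B (hSbB h2)]
        -- q * c⁻¹ ≤ (K+Γ)⁻¹  where  c = Sb.card ≥ K  and  K+Γ ≤ K*(Γ+1)
        have hKG : (0 : ℝ) < (K : ℝ) + (Γ : ℝ) := by
          have : (1 : ℝ) ≤ (K : ℝ) := by exact_mod_cast hK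
          have : (0 : ℝ) ≤ (Γ : ℝ) := Nat.cast_nonneg _
          linarith [show (1:ℝ) ≤ (K:ℝ) from by exact_mod_cast hK]
        have hnat : (K : ℝ) + (Γ : ℝ) ≤ (Sb.card : ℝ) * ((Γ : ℝ) + 1) := by
          have h1 : K + Γ ≤ Sb.card * (Γ + 1) := by
            have : K + Γ ≤ K * (Γ + 1) := by nlinarith [hK]
            calc K + Γ ≤ K * (Γ + 1) := this
              _ ≤ Sb.card * (Γ + 1) := Nat.mul_le_mul_right _ hSbcard
          exact_mod_cast h1
        rw [hq, ← mul_inv]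
        exact inv_anti₀ hKG (by nlinarith [hnat])
      · rw [if_neg h2]
        exact xbal_nonneg e
  have hyμ : ∀ e ∈ μ, y e = 0 := by
    intro e he
    rw [hy]; dsimp only
    have h1 : e ≠ e0 := fun hc => he0μ (hc ▸ he)
    have h2 : e ∉ Sb := fun hc => (Finset.mem_sdiff.1 hc).2 he
    simp [h1, h2]
  have := le_payoffF (μ := μ) (x := xbal Γ K) y hy0 hyx hyμ hcons
  rwa [hyval] at this

lemma mem_Scenarios {μ : Finset (Fin (M Γ K))} :
    μ ∈ Scenarios (Fin (M Γ K)) Γ ↔ μ.card = Γ := by simp [Scenarios]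

variable (Γ K) in
/-- The scenario removing all source arcs except `aArc i`. -/
def muScen (i : Fin (Γ + 1)) : Finset (Fin (M Γ K)) := (Aset Γ K).erase (aArc Γ K i)

lemma card_muScen (i : Fin (Γ + 1)) : (muScen Γ K i).card = Γ := by
  rw [muScen, Finset.card_erase_of_mem (aArc_mem_Aset i), card_Aset]
  omega

lemma muScen_injective : Function.Injective (muScen Γ K) := by
  intro i j h
  by_contra hij
  have h1 : aArc Γ K j ∈ muScen Γ K i :=
    Finset.mem_erase.2 ⟨fun hc => hij (aArc_injective hc).symm, aArc_mem_Aset j⟩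
  rw [h, muScen] at h1
  exact (Finset.mem_erase.1 h1).1 rfl

lemma Aset_sdiff_muScen (i : Fin (Γ + 1)) :
    Aset Γ K \ muScen Γ K i = {aArc Γ K i} :=
  Finset.sdiff_erase_self (aArc_mem_Aset i)

lemma sum_aArc (x : Fin (M Γ K) → ℝ) :
    ∑ e ∈ Aset Γ K, x e = ∑ i : Fin (Γ + 1), x (aArc Γ K i) := by
  rw [Aset_eq, Finset.sum_image (fun a _ b _ h => aArc_injective h)]

variable (Γ K) in
def Ascen : Finset (Finset (Fin (M Γ K))) := Finset.image (muScen Γ K) Finset.univ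

lemma Ascen_subset : Ascen Γ K ⊆ Scenarios (Fin (M Γ K)) Γ := by
  intro μ hμ
  obtain ⟨i, _, rfl⟩ := Finset.mem_image.1 hμ
  exact mem_Scenarios.2 (card_muScen i)

lemma card_Ascen : (Ascen Γ K).card = Γ + 1 := by
  rw [Ascen, Finset.card_image_of_injective _ muScen_injective, Finset.card_univ,
    Fintype.card_fin]

variable (Γ K) in
/-- The uniform distribution on the scenarios `muScen i`. -/
noncomputable def alphaStar : Finset (Fin (M Γ K)) → ℝ :=
  fun μ => if μ ∈ Ascen Γ K then ((Γ : ℝ) + 1)⁻¹ else 0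

lemma sum_ite_subset' {β : Type*} [DecidableEq β] {S T : Finset β} (hTS : T ⊆ S) (c : ℝ) :
    ∑ e ∈ S, (if e ∈ T then c else 0) = T.card * c := by
  rw [Finset.sum_ite_mem, Finset.inter_eq_right.mpr hTS, Finset.sum_const, nsmul_eq_mul]

lemma isDist_alphaStar : IsDist (Fin (M Γ K)) Γ (alphaStar Γ K) := by
  refine ⟨fun μ => ?_, fun μ hμ => ?_, ?_⟩
  · unfold alphaStar; split
    · positivity
    · exact le_refl 0
  · unfold alphaStar
    rw [if_neg (fun hc => hμ (Ascen_subset hc))]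
  · rw [show (fun μ => alphaStar Γ K μ) = fun μ => if μ ∈ Ascen Γ K then ((Γ:ℝ)+1)⁻¹ else 0 from rfl]
    rw [sum_ite_subset' Ascen_subset, card_Ascen]
    push_cast
    field_simp

lemma sum_alphaStar_mul (g : Finset (Fin (M Γ K)) → ℝ) :
    ∑ μ ∈ Scenarios (Fin (M Γ K)) Γ, alphaStar Γ K μ * g μ
      = ((Γ : ℝ) + 1)⁻¹ * ∑ i : Fin (Γ + 1), g (muScen Γ K i) := by
  have h1 : ∀ μ ∈ Scenarios (Fin (M Γ K)) Γ,
      alphaStar Γ K μ * g μ = if μ ∈ Ascen Γ K then ((Γ : ℝ) + 1)⁻¹ * g μ else 0 := by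
    intro μ _
    unfold alphaStar
    split <;> simp
  rw [Finset.sum_congr rfl h1, ← Finset.sum_filter,
    Finset.filter_mem_eq_inter, Finset.inter_eq_right.mpr Ascen_subset, Ascen,
    Finset.sum_image (fun a _ b _ h => muScen_injective h), Finset.mul_sum]

lemma isFlow_zero : IsFlow (asrc Γ K) (adst Γ K) 0 2 (au Γ K) (fun _ => 0) :=
  ⟨fun _ => le_refl 0, fun e => au_nonneg e, (conserves_iff _).2 (by simp)⟩

lemma expPayoffF_le {α : Finset (Fin (M Γ K)) → ℝ} (hα : IsDist (Fin (M Γ K)) Γ α)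
    {x : Fin (M Γ K) → ℝ} (hx : IsFlow (asrc Γ K) (adst Γ K) 0 2 (au Γ K) x) :
    ∑ μ ∈ Scenarios (Fin (M Γ K)) Γ, α μ * payoffF (asrc Γ K) (adst Γ K) 0 2 μ x
      ≤ ((K : ℝ) + Γ) * (K : ℝ)⁻¹ := by
  have h1 : ∀ μ ∈ Scenarios (Fin (M Γ K)) Γ,
      α μ * payoffF (asrc Γ K) (adst Γ K) 0 2 μ x ≤ α μ * (((K : ℝ) + Γ) * (K : ℝ)⁻¹) :=
    fun μ _ => mul_le_mul_of_nonneg_left (payoffF_le_Bu hx.1 hx.2.1) (hα.1 μ)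
  calc _ ≤ ∑ μ ∈ Scenarios (Fin (M Γ K)) Γ, α μ * (((K : ℝ) + Γ) * (K : ℝ)⁻¹) :=
        Finset.sum_le_sum h1
    _ = ((K : ℝ) + Γ) * (K : ℝ)⁻¹ := by rw [← Finset.sum_mul, hα.2.2, one_mul]

lemma bddAbove_RNIinner {α : Finset (Fin (M Γ K)) → ℝ} (hα : IsDist (Fin (M Γ K)) Γ α) :
    BddAbove {w : ℝ | ∃ x : Fin (M Γ K) → ℝ,
      IsFlow (asrc Γ K) (adst Γ K) 0 2 (au Γ K) x ∧
      w = ∑ μ ∈ Scenarios (Fin (M Γ K)) Γ, α μ * payoffF (asrc Γ K) (adst Γ K) 0 2 μ x} := by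
  refine ⟨((K : ℝ) + Γ) * (K : ℝ)⁻¹, ?_⟩
  rintro w ⟨x, hx, rfl⟩
  exact expPayoffF_le hα hx

lemma zero_mem_RNIinner {α : Finset (Fin (M Γ K)) → ℝ} :
    (0 : ℝ) ∈ {w : ℝ | ∃ x : Fin (M Γ K) → ℝ,
      IsFlow (asrc Γ K) (adst Γ K) 0 2 (au Γ K) x ∧
      w = ∑ μ ∈ Scenarios (Fin (M Γ K)) Γ, α μ * payoffF (asrc Γ K) (adst Γ K) 0 2 μ x} := by
  refine ⟨fun _ => 0, isFlow_zero, ?_⟩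
  rw [Finset.sum_congr rfl fun μ _ => by rw [payoffF_zeroflow μ, mul_zero]]
  simp

lemma Z_NI_ge (hK : 1 ≤ K) :
    1 ≤ Z_NI (asrc Γ K) (adst Γ K) 0 2 (au Γ K) Γ := by
  apply le_csInf
  · exact ⟨_, ⟨muScen Γ K ⟨0, by omega⟩, mem_Scenarios.2 (card_muScen _), rfl⟩⟩
  · rintro z ⟨μ, hμ, rfl⟩
    have hcard : μ.card ≤ Γ := le_of_eq (mem_Scenarios.1 hμ)
    have hbdd : BddAbove {w : ℝ | ∃ x : Fin (M Γ K) → ℝ,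
        IsFlow (asrc Γ K) (adst Γ K) 0 2 (au Γ K) x ∧
        w = payoffF (asrc Γ K) (adst Γ K) 0 2 μ x} := by
      refine ⟨((K : ℝ) + Γ) * (K : ℝ)⁻¹, ?_⟩
      rintro w ⟨x, hx, rfl⟩
      exact payoffF_le_Bu hx.1 hx.2.1
    exact le_trans (one_le_payoffF_xfor hK hcard)
      (le_csSup hbdd ⟨xfor Γ K μ, isFlow_xfor hK hcard, rfl⟩)

lemma Z_RNI_le (hK : 1 ≤ K) :
    Z_RNI (asrc Γ K) (adst Γ K) 0 2 (au Γ K) Γ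
      ≤ ((Γ : ℝ) + 1)⁻¹ * (((K : ℝ) + Γ) * (K : ℝ)⁻¹) := by
  have hq0 : (0 : ℝ) ≤ ((Γ : ℝ) + 1)⁻¹ := by positivity
  have hbb : BddBelow {z : ℝ | ∃ α : Finset (Fin (M Γ K)) → ℝ,
      IsDist (Fin (M Γ K)) Γ α ∧ z = sSup {w : ℝ | ∃ x : Fin (M Γ K) → ℝ,
        IsFlow (asrc Γ K) (adst Γ K) 0 2 (au Γ K) x ∧
        w = ∑ μ ∈ Scenarios (Fin (M Γ K)) Γ, α μ * payoffF (asrc Γ K) (adst Γ K) 0 2 μ x}} := by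
    refine ⟨0, ?_⟩
    rintro z ⟨α, hα, rfl⟩
    exact le_csSup (bddAbove_RNIinner hα) zero_mem_RNIinner
  refine le_trans (csInf_le hbb ⟨alphaStar Γ K, isDist_alphaStar, rfl⟩) ?_
  apply csSup_le ⟨0, zero_mem_RNIinner⟩
  rintro w ⟨x, hx, rfl⟩
  rw [sum_alphaStar_mul]
  apply mul_le_mul_of_nonneg_left ?_ hq0
  calc ∑ i : Fin (Γ + 1), payoffF (asrc Γ K) (adst Γ K) 0 2 (muScen Γ K i) x
      ≤ ∑ i : Fin (Γ + 1), x (aArc Γ K i) := by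
        refine Finset.sum_le_sum fun i _ => ?_
        have := payoffF_le_A (μ := muScen Γ K i) hx.1
        rwa [Aset_sdiff_muScen, Finset.sum_singleton] at this
    _ = ∑ e ∈ Aset Γ K, x e := (sum_aArc x).symm
    _ = ∑ e ∈ Bset Γ K, x e := (conserves_iff x).1 hx.2.2
    _ ≤ ∑ e ∈ Bset Γ K, au Γ K e := Finset.sum_le_sum fun e _ => hx.2.1 e
    _ = ((K : ℝ) + Γ) * (K : ℝ)⁻¹ := sum_au_Bset

lemma Z_RNI_ge (hK : 1 ≤ K) :
    ((Γ : ℝ) + 1)⁻¹ ≤ Z_RNI (asrc Γ K) (adst Γ K) 0 2 (au Γ K) Γ := by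
  apply le_csInf
  · exact ⟨_, alphaStar Γ K, isDist_alphaStar, rfl⟩
  · rintro z ⟨α, hα, rfl⟩
    have hmem : (∑ μ ∈ Scenarios (Fin (M Γ K)) Γ,
        α μ * payoffF (asrc Γ K) (adst Γ K) 0 2 μ (xbal Γ K)) ∈ {w : ℝ | ∃ x,
        IsFlow (asrc Γ K) (adst Γ K) 0 2 (au Γ K) x ∧
        w = ∑ μ ∈ Scenarios (Fin (M Γ K)) Γ, α μ * payoffF (asrc Γ K) (adst Γ K) 0 2 μ x} :=
      ⟨xbal Γ K, isFlow_xbal hK, rfl⟩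
    refine le_trans ?_ (le_csSup (bddAbove_RNIinner hα) hmem)
    calc ((Γ : ℝ) + 1)⁻¹ = ∑ μ ∈ Scenarios (Fin (M Γ K)) Γ, α μ * ((Γ : ℝ) + 1)⁻¹ := by
          rw [← Finset.sum_mul, hα.2.2, one_mul]
      _ ≤ _ := Finset.sum_le_sum fun μ hμ => mul_le_mul_of_nonneg_left
          (payoffF_xbal_ge hK (le_of_eq (mem_Scenarios.1 hμ))) (hα.1 μ)

lemma mem_stPaths {p : List (Fin (M Γ K))} :
    p ∈ stPaths (asrc Γ K) (adst Γ K) 0 2 ↔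
      p.Nodup ∧ IsSTPath (asrc Γ K) (adst Γ K) 0 2 p := by
  unfold stPaths
  rw [@Finset.mem_filter _ _ (Classical.decPred _)]
  constructor
  · rintro ⟨hmem, hpath⟩
    obtain ⟨⟨l, hl⟩, -, rfl⟩ := Finset.mem_image.1 hmem
    exact ⟨hl, hpath⟩
  · rintro ⟨hnd, hpath⟩
    exact ⟨Finset.mem_image.2 ⟨⟨p, hnd⟩, Finset.mem_univ _, rfl⟩, hpath⟩

lemma stPath_last_B {p : List (Fin (M Γ K))}
    (hp : IsSTPath (asrc Γ K) (adst Γ K) 0 2 p) : ∃ e ∈ p, e ∈ Bset Γ K := by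
  obtain ⟨hne, -, hlast, -, -⟩ := hp
  refine ⟨p.getLast hne, List.getLast_mem hne, ?_⟩
  refine adst_eq_two.1 (hlast _ ?_)
  simp [List.getLast?_eq_getLast hne]

lemma avoid_unique {p : List (Fin (M Γ K))}
    (hp : IsSTPath (asrc Γ K) (adst Γ K) 0 2 p) {i j : Fin (Γ + 1)}
    (hi : ∀ e ∈ p, e ∉ muScen Γ K i) (hj : ∀ e ∈ p, e ∉ muScen Γ K j) : i = j := by
  obtain ⟨hne, hhead, -, -, -⟩ := hp
  have hep : p.head hne ∈ p := List.head_mem hne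
  have hsrc : asrc Γ K (p.head hne) = 0 := hhead _ (by simp [List.head?_eq_head hne])
  have heA : p.head hne ∈ Aset Γ K := asrc_eq_zero.1 hsrc
  have h1 : p.head hne = aArc Γ K i := by
    by_contra hne'
    exact hi _ hep (Finset.mem_erase.2 ⟨hne', heA⟩)
  have h2 : p.head hne = aArc Γ K j := by
    by_contra hne'
    exact hj _ hep (Finset.mem_erase.2 ⟨hne', heA⟩)
  exact aArc_injective (h1 ▸ h2)

lemma sum_xP_le {xP : List (Fin (M Γ K)) → ℝ}
    (hxP : IsPathFlow (asrc Γ K) (adst Γ K) 0 2 (au Γ K) xP) :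
    ∑ p ∈ stPaths (asrc Γ K) (adst Γ K) 0 2, xP p ≤ ((K : ℝ) + Γ) * (K : ℝ)⁻¹ := by
  have step1 : ∀ p ∈ stPaths (asrc Γ K) (adst Γ K) 0 2,
      xP p ≤ ∑ e ∈ Bset Γ K, (if e ∈ p then xP p else 0) := by
    intro p hp
    obtain ⟨e, hep, heB⟩ := stPath_last_B (mem_stPaths.1 hp).2
    have := Finset.single_le_sum (f := fun e => if e ∈ p then xP p else 0)
      (fun e _ => by split <;> [exact hxP.1 p; exact le_refl 0]) heB
    simpa [hep] using this
  calc ∑ p ∈ stPaths (asrc Γ K) (adst Γ K) 0 2, xP p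
      ≤ ∑ p ∈ stPaths (asrc Γ K) (adst Γ K) 0 2, ∑ e ∈ Bset Γ K,
          (if e ∈ p then xP p else 0) := Finset.sum_le_sum step1
    _ = ∑ e ∈ Bset Γ K, ∑ p ∈ stPaths (asrc Γ K) (adst Γ K) 0 2,
          (if e ∈ p then xP p else 0) := Finset.sum_comm
    _ ≤ ∑ e ∈ Bset Γ K, au Γ K e := Finset.sum_le_sum fun e _ => hxP.2.2 e
    _ = ((K : ℝ) + Γ) * (K : ℝ)⁻¹ := sum_au_Bset

lemma payoffG_le_sum {μ : Finset (Fin (M Γ K))} {xP : List (Fin (M Γ K)) → ℝ}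
    (h0 : ∀ p, 0 ≤ xP p) :
    payoffG (asrc Γ K) (adst Γ K) 0 2 μ xP
      ≤ ∑ p ∈ stPaths (asrc Γ K) (adst Γ K) 0 2, xP p := by
  refine Finset.sum_le_sum fun p _ => ?_
  refine mul_le_of_le_one_left (h0 p) (max_le zero_le_one ?_)
  have : (0 : ℝ) ≤ ((p.countP fun e => decide (e ∈ μ)) : ℝ) := Nat.cast_nonneg _
  linarith

lemma payoffG_nonneg (μ : Finset (Fin (M Γ K))) {xP : List (Fin (M Γ K)) → ℝ}
    (h0 : ∀ p, 0 ≤ xP p) : 0 ≤ payoffG (asrc Γ K) (adst Γ K) 0 2 μ xP :=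
  Finset.sum_nonneg fun p _ => mul_nonneg (le_max_left 0 _) (h0 p)

variable (Γ K) in
/-- The canonical two-arc path through `aArc i` and `bArc k`. -/
def cpath (i : Fin (Γ + 1)) (k : Fin (K + Γ)) : List (Fin (M Γ K)) :=
  [aArc Γ K i, bArc Γ K k]

lemma aArc_ne_bArc (i : Fin (Γ + 1)) (k : Fin (K + Γ)) : aArc Γ K i ≠ bArc Γ K k := by
  intro h
  have h1 : (aArc Γ K i).1 = (bArc Γ K k).1 := by rw [h]
  simp only [aArc, bArc] at h1
  omega

lemma cpath_mem (i : Fin (Γ + 1)) (k : Fin (K + Γ)) :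
    cpath Γ K i k ∈ stPaths (asrc Γ K) (adst Γ K) 0 2 := by
  rw [mem_stPaths]
  constructor
  · simp [cpath, aArc_ne_bArc i k]
  · refine ⟨by simp [cpath], ?_, ?_, ?_, ?_⟩
    · intro e he
      simp only [cpath, List.head?_cons, Option.mem_some_iff] at he
      rw [← he] at *
      exact asrc_eq_zero.2 (aArc_mem_Aset i)
    · intro e he
      simp only [cpath, List.getLast?_cons_cons, List.getLast?_singleton,
        Option.mem_some_iff] at he
      rw [← he] at *
      exact adst_eq_two.2 (bArc_mem_Bset k)
    · simp only [cpath, List.Chain', List.isChain_cons_cons, List.isChain_singleton, and_true]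
      rw [adst_eq_one.2 (aArc_mem_Aset i), asrc_eq_one.2 (bArc_mem_Bset k)]
    · simp only [cpath, List.map_cons, List.map_nil]
      rw [asrc_eq_zero.2 (aArc_mem_Aset i), asrc_eq_one.2 (bArc_mem_Bset k)]
      decide

lemma cpath_injective :
    Function.Injective (fun ik : Fin (Γ + 1) × Fin (K + Γ) => cpath Γ K ik.1 ik.2) := by
  rintro ⟨i, k⟩ ⟨j, l⟩ h
  simp only [cpath, List.cons.injEq, and_true] at h
  exact Prod.ext (aArc_injective h.1) (bArc_injective h.2)

variable (Γ K) in
def Cpaths : Finset (List (Fin (M Γ K))) :=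
  Finset.image (fun ik : Fin (Γ + 1) × Fin (K + Γ) => cpath Γ K ik.1 ik.2) Finset.univ

lemma Cpaths_subset : Cpaths Γ K ⊆ stPaths (asrc Γ K) (adst Γ K) 0 2 := by
  intro p hp
  obtain ⟨⟨i, k⟩, -, rfl⟩ := Finset.mem_image.1 hp
  exact cpath_mem i k

variable (Γ K) in
/-- The balanced path flow. -/
noncomputable def xPbal : List (Fin (M Γ K)) → ℝ :=
  fun p => if p ∈ Cpaths Γ K then ((Γ : ℝ) + 1)⁻¹ * ((K : ℝ) + (Γ : ℝ))⁻¹ else 0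

lemma xPbal_nonneg (p : List (Fin (M Γ K))) : 0 ≤ xPbal Γ K p := by
  unfold xPbal; split
  · positivity
  · exact le_refl 0

lemma isPathFlow_xPbal (hK : 1 ≤ K) :
    IsPathFlow (asrc Γ K) (adst Γ K) 0 2 (au Γ K) (xPbal Γ K) := by
  have hK0 : (0 : ℝ) < (K : ℝ) := by exact_mod_cast hK
  have hKG0 : (0 : ℝ) < (K : ℝ) + (Γ : ℝ) := by
    have : (0 : ℝ) ≤ (Γ : ℝ) := Nat.cast_nonneg _
    linarith
  have hG0 : (0 : ℝ) < (Γ : ℝ) + 1 := by positivity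
  refine ⟨xPbal_nonneg, ?_, ?_⟩
  · intro p hp
    unfold xPbal
    rw [if_neg (fun hc => hp (Cpaths_subset hc))]
  · intro e
    set t0 : ℝ := ((Γ : ℝ) + 1)⁻¹ * ((K : ℝ) + (Γ : ℝ))⁻¹ with ht0
    have hsub : ∑ p ∈ stPaths (asrc Γ K) (adst Γ K) 0 2,
        (if e ∈ p then xPbal Γ K p else 0)
        = ∑ p ∈ Cpaths Γ K, (if e ∈ p then xPbal Γ K p else 0) := by
      refine (Finset.sum_subset Cpaths_subset fun p _ hp => ?_).symm
      have : xPbal Γ K p = 0 := by unfold xPbal; rw [if_neg hp]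
      rw [this]; simp
    rw [hsub, Cpaths, Finset.sum_image (fun a _ b _ h => cpath_injective h)]
    have hval : ∀ ik : Fin (Γ + 1) × Fin (K + Γ),
        (if e ∈ cpath Γ K ik.1 ik.2 then xPbal Γ K (cpath Γ K ik.1 ik.2) else 0)
          = if e = aArc Γ K ik.1 ∨ e = bArc Γ K ik.2 then t0 else 0 := by
      rintro ⟨i, k⟩
      have hmem : cpath Γ K i k ∈ Cpaths Γ K :=
        Finset.mem_image.2 ⟨⟨i, k⟩, Finset.mem_univ _, rfl⟩
      have : xPbal Γ K (cpath Γ K i k) = t0 := by unfold xPbal; rw [if_pos hmem]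
      rw [this]
      congr 1
      simp [cpath]
    rw [Finset.sum_congr rfl fun ik _ => hval ik]
    by_cases he : e ∈ Aset Γ K
    · -- e is a source arc
      have heA : (e : ℕ) < Γ + 1 := mem_Aset.1 he
      have hne : ∀ k : Fin (K + Γ), e ≠ bArc Γ K k := by
        intro k hc
        have : (e : ℕ) = Γ + 1 + k := by rw [hc]; rfl
        omega
      have : ∀ ik : Fin (Γ + 1) × Fin (K + Γ),
          (if e = aArc Γ K ik.1 ∨ e = bArc Γ K ik.2 then t0 else 0)
            = if ik.1 = ⟨(e : ℕ), heA⟩ then t0 else 0 := by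
        rintro ⟨i, k⟩
        congr 1
        simp only [hne k, or_false, eq_iff_iff]
        constructor
        · intro h; exact aArc_injective (show aArc Γ K ⟨(e:ℕ), heA⟩ = aArc Γ K i from
            Fin.ext (by rw [← h]; rfl)).symm
        · rintro rfl; exact Fin.ext rfl
      have hinner : ∀ i : Fin (Γ + 1),
          (∑ _k : Fin (K + Γ), if i = (⟨(e : ℕ), heA⟩ : Fin (Γ + 1)) then t0 else 0)
            = if i = (⟨(e : ℕ), heA⟩ : Fin (Γ + 1)) then ((K + Γ : ℕ) : ℝ) * t0 else 0 := by
        intro i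
        rw [Finset.sum_const, Finset.card_univ, Fintype.card_fin]
        split <;> simp
      rw [Finset.sum_congr rfl fun ik _ => this ik, Fintype.sum_prod_type,
        Finset.sum_congr rfl fun i _ => hinner i, Fintype.sum_ite_eq']
      rw [au_Aset he, ht0]
      push_cast
      rw [show ((K : ℝ) + Γ) * (((Γ:ℝ)+1)⁻¹ * ((K:ℝ)+(Γ:ℝ))⁻¹) = ((Γ:ℝ)+1)⁻¹ *
        (((K:ℝ)+(Γ:ℝ)) * ((K:ℝ)+(Γ:ℝ))⁻¹) from by ring, mul_inv_cancel₀ (ne_of_gt hKG0),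
        mul_one]
      exact inv_le_one_of_one_le₀ (by linarith [Nat.cast_nonneg (α := ℝ) Γ])
    · -- e is a sink arc
      have heB : ¬ (e : ℕ) < Γ + 1 := fun hc => he (mem_Aset.2 hc)
      have hkval : (e : ℕ) - (Γ + 1) < K + Γ := by
        have := e.2; simp only [M] at this; omega
      have hne : ∀ i : Fin (Γ + 1), e ≠ aArc Γ K i := by
        intro i hc
        have : (e : ℕ) = i := by rw [hc]; rfl
        have := i.2; omega
      have : ∀ ik : Fin (Γ + 1) × Fin (K + Γ),
          (if e = aArc Γ K ik.1 ∨ e = bArc Γ K ik.2 then t0 else 0)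
            = if ik.2 = ⟨(e : ℕ) - (Γ + 1), hkval⟩ then t0 else 0 := by
        rintro ⟨i, k⟩
        congr 1
        simp only [hne i, false_or, eq_iff_iff]
        constructor
        · intro h
          apply bArc_injective (Γ := Γ) (K := K)
          apply Fin.ext
          show (Γ + 1 + (k : ℕ) : ℕ) = Γ + 1 + ((e : ℕ) - (Γ + 1))
          have : (e : ℕ) = Γ + 1 + k := by rw [h]; rfl
          omega
        · rintro rfl
          apply Fin.ext
          show (e : ℕ) = Γ + 1 + ((e : ℕ) - (Γ + 1))
          omega
      rw [Finset.sum_congr rfl fun ik _ => this ik, Fintype.sum_prod_type,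
        Finset.sum_congr rfl fun i _ =>
          (Fintype.sum_ite_eq' (⟨(e : ℕ) - (Γ + 1), hkval⟩ : Fin (K + Γ)) fun _ => t0),
        Finset.sum_const, Finset.card_univ, Fintype.card_fin, nsmul_eq_mul]
      rw [au_Bset (mem_Bset.2 heB), ht0]
      push_cast
      rw [show ((Γ : ℝ) + 1) * (((Γ:ℝ)+1)⁻¹ * ((K:ℝ)+(Γ:ℝ))⁻¹) =
        (((Γ:ℝ)+1) * ((Γ:ℝ)+1)⁻¹) * ((K:ℝ)+(Γ:ℝ))⁻¹ from by ring,
        mul_inv_cancel₀ (ne_of_gt hG0), one_mul]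
      exact inv_anti₀ hK0 (by linarith [Nat.cast_nonneg (α := ℝ) Γ])

lemma payoffG_xPbal_ge (hK : 1 ≤ K) {μ : Finset (Fin (M Γ K))} (hμ : μ.card ≤ Γ) :
    ((Γ : ℝ) + 1)⁻¹ * ((K : ℝ) + (Γ : ℝ))⁻¹
      ≤ payoffG (asrc Γ K) (adst Γ K) 0 2 μ (xPbal Γ K) := by
  set t0 : ℝ := ((Γ : ℝ) + 1)⁻¹ * ((K : ℝ) + (Γ : ℝ))⁻¹ with ht0
  obtain ⟨e0, he0⟩ := Finset.card_pos.1 (Nat.lt_of_lt_of_le Nat.zero_lt_one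
    (card_Asdiff_pos (K := K) hμ))
  obtain ⟨e1, he1⟩ := Finset.card_pos.1 (Nat.lt_of_lt_of_le
    (Nat.lt_of_lt_of_le Nat.zero_lt_one hK) (card_Bsdiff_ge hμ))
  have he0A : e0 ∈ Aset Γ K := (Finset.mem_sdiff.1 he0).1
  have he0μ : e0 ∉ μ := (Finset.mem_sdiff.1 he0).2
  have he1B : e1 ∈ Bset Γ K := (Finset.mem_sdiff.1 he1).1
  have he1μ : e1 ∉ μ := (Finset.mem_sdiff.1 he1).2
  have hi0 : (e0 : ℕ) < Γ + 1 := mem_Aset.1 he0A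
  have hk0' : ¬ (e1 : ℕ) < Γ + 1 := mem_Bset.1 he1B
  have hk0 : (e1 : ℕ) - (Γ + 1) < K + Γ := by
    have := e1.2; simp only [M] at this; omega
  set i0 : Fin (Γ + 1) := ⟨(e0 : ℕ), hi0⟩ with hi0def
  set k0 : Fin (K + Γ) := ⟨(e1 : ℕ) - (Γ + 1), hk0⟩ with hk0def
  have haa : aArc Γ K i0 = e0 := Fin.ext rfl
  have hbb : bArc Γ K k0 = e1 := Fin.ext (by show Γ + 1 + ((e1 : ℕ) - (Γ + 1)) = (e1 : ℕ); omega)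
  have hcnt : (cpath Γ K i0 k0).countP (fun e => decide (e ∈ μ)) = 0 := by
    rw [List.countP_eq_zero]
    intro e he
    simp only [cpath, List.mem_cons, List.mem_singleton, List.not_mem_nil, or_false] at he
    rcases he with rfl | rfl
    · rw [haa]; simpa using he0μ
    · rw [hbb]; simpa using he1μ
  have hterm : max 0 (1 - (((cpath Γ K i0 k0).countP fun e => decide (e ∈ μ)) : ℝ))
      * xPbal Γ K (cpath Γ K i0 k0) = t0 := by
    rw [hcnt]
    have hmemC : cpath Γ K i0 k0 ∈ Cpaths Γ K := by
      rw [Cpaths]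
      exact Finset.mem_image.2 ⟨⟨i0, k0⟩, Finset.mem_univ _, rfl⟩
    have hx : xPbal Γ K (cpath Γ K i0 k0) = t0 := by
      unfold xPbal
      rw [if_pos hmemC]
    rw [hx]
    norm_num
  calc t0 = max 0 (1 - (((cpath Γ K i0 k0).countP fun e => decide (e ∈ μ)) : ℝ))
        * xPbal Γ K (cpath Γ K i0 k0) := hterm.symm
    _ ≤ payoffG (asrc Γ K) (adst Γ K) 0 2 μ (xPbal Γ K) :=
      Finset.single_le_sum (f := fun p =>
          max 0 (1 - ((p.countP fun e => decide (e ∈ μ)) : ℝ)) * xPbal Γ K p)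
        (fun p _ => mul_nonneg (le_max_left 0 _) (xPbal_nonneg p)) (cpath_mem i0 k0)

lemma expPayoffG_le {α : Finset (Fin (M Γ K)) → ℝ} (hα : IsDist (Fin (M Γ K)) Γ α)
    {xP : List (Fin (M Γ K)) → ℝ}
    (hxP : IsPathFlow (asrc Γ K) (adst Γ K) 0 2 (au Γ K) xP) :
    ∑ μ ∈ Scenarios (Fin (M Γ K)) Γ, α μ * payoffG (asrc Γ K) (adst Γ K) 0 2 μ xP
      ≤ ((K : ℝ) + Γ) * (K : ℝ)⁻¹ := by
  calc _ ≤ ∑ μ ∈ Scenarios (Fin (M Γ K)) Γ, α μ * (((K : ℝ) + Γ) * (K : ℝ)⁻¹) :=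
        Finset.sum_le_sum fun μ _ => mul_le_mul_of_nonneg_left
          (le_trans (payoffG_le_sum hxP.1) (sum_xP_le hxP)) (hα.1 μ)
    _ = ((K : ℝ) + Γ) * (K : ℝ)⁻¹ := by rw [← Finset.sum_mul, hα.2.2, one_mul]

lemma isPathFlow_zero : IsPathFlow (asrc Γ K) (adst Γ K) 0 2 (au Γ K) (fun _ => 0) :=
  ⟨fun _ => le_refl 0, fun _ _ => rfl, fun e => by simpa using au_nonneg e⟩

lemma payoffG_zero (μ : Finset (Fin (M Γ K))) :
    payoffG (asrc Γ K) (adst Γ K) 0 2 μ (fun _ => 0) = 0 := by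
  unfold payoffG
  simp

lemma bddAbove_RNIPinner {α : Finset (Fin (M Γ K)) → ℝ} (hα : IsDist (Fin (M Γ K)) Γ α) :
    BddAbove {w : ℝ | ∃ xP : List (Fin (M Γ K)) → ℝ,
      IsPathFlow (asrc Γ K) (adst Γ K) 0 2 (au Γ K) xP ∧
      w = ∑ μ ∈ Scenarios (Fin (M Γ K)) Γ, α μ * payoffG (asrc Γ K) (adst Γ K) 0 2 μ xP} := by
  refine ⟨((K : ℝ) + Γ) * (K : ℝ)⁻¹, ?_⟩
  rintro w ⟨xP, hxP, rfl⟩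
  exact expPayoffG_le hα hxP

lemma zero_mem_RNIPinner {α : Finset (Fin (M Γ K)) → ℝ} :
    (0 : ℝ) ∈ {w : ℝ | ∃ xP : List (Fin (M Γ K)) → ℝ,
      IsPathFlow (asrc Γ K) (adst Γ K) 0 2 (au Γ K) xP ∧
      w = ∑ μ ∈ Scenarios (Fin (M Γ K)) Γ, α μ * payoffG (asrc Γ K) (adst Γ K) 0 2 μ xP} := by
  refine ⟨fun _ => 0, isPathFlow_zero, ?_⟩
  rw [Finset.sum_congr rfl fun μ _ => by rw [payoffG_zero μ, mul_zero]]
  simp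

lemma Z_RNIPath_le (hK : 1 ≤ K) :
    Z_RNIPath (asrc Γ K) (adst Γ K) 0 2 (au Γ K) Γ
      ≤ ((Γ : ℝ) + 1)⁻¹ * (((K : ℝ) + Γ) * (K : ℝ)⁻¹) := by
  have hq0 : (0 : ℝ) ≤ ((Γ : ℝ) + 1)⁻¹ := by positivity
  have hbb : BddBelow {z : ℝ | ∃ α : Finset (Fin (M Γ K)) → ℝ,
      IsDist (Fin (M Γ K)) Γ α ∧ z = sSup {w : ℝ | ∃ xP : List (Fin (M Γ K)) → ℝ,
        IsPathFlow (asrc Γ K) (adst Γ K) 0 2 (au Γ K) xP ∧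
        w = ∑ μ ∈ Scenarios (Fin (M Γ K)) Γ, α μ * payoffG (asrc Γ K) (adst Γ K) 0 2 μ xP}} := by
    refine ⟨0, ?_⟩
    rintro z ⟨α, hα, rfl⟩
    exact le_csSup (bddAbove_RNIPinner hα) zero_mem_RNIPinner
  refine le_trans (csInf_le hbb ⟨alphaStar Γ K, isDist_alphaStar, rfl⟩) ?_
  apply csSup_le ⟨0, zero_mem_RNIPinner⟩
  rintro w ⟨xP, hxP, rfl⟩
  rw [sum_alphaStar_mul]
  apply mul_le_mul_of_nonneg_left ?_ hq0
  have key : ∀ p ∈ stPaths (asrc Γ K) (adst Γ K) 0 2,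
      (∑ i : Fin (Γ + 1),
        max 0 (1 - ((p.countP fun e => decide (e ∈ muScen Γ K i)) : ℝ)) * xP p) ≤ xP p := by
    intro p hp
    have hstep : ∀ i : Fin (Γ + 1),
        max 0 (1 - ((p.countP fun e => decide (e ∈ muScen Γ K i)) : ℝ)) * xP p
          ≤ if (p.countP fun e => decide (e ∈ muScen Γ K i)) = 0 then xP p else 0 := by
      intro i
      by_cases hc : (p.countP fun e => decide (e ∈ muScen Γ K i)) = 0
      · rw [if_pos hc, hc]
        norm_num
      · rw [if_neg hc]
        have h1 : (1 : ℝ) ≤ ((p.countP fun e => decide (e ∈ muScen Γ K i)) : ℝ) := by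
          exact_mod_cast Nat.one_le_iff_ne_zero.2 hc
        rw [max_eq_left (by linarith), zero_mul]
    refine le_trans (Finset.sum_le_sum fun i _ => hstep i) ?_
    rw [← Finset.sum_filter]
    have hcard : (Finset.univ.filter fun i : Fin (Γ + 1) =>
        (p.countP fun e => decide (e ∈ muScen Γ K i)) = 0).card ≤ 1 := by
      refine Finset.card_le_one.2 fun i hi j hj => ?_
      have hi' := (Finset.mem_filter.1 hi).2
      have hj' := (Finset.mem_filter.1 hj).2
      rw [List.countP_eq_zero] at hi' hj'
      exact avoid_unique (mem_stPaths.1 hp).2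
        (fun e he => by simpa using hi' e he) (fun e he => by simpa using hj' e he)
    rw [Finset.sum_const, nsmul_eq_mul]
    calc ((Finset.univ.filter fun i : Fin (Γ + 1) =>
          (p.countP fun e => decide (e ∈ muScen Γ K i)) = 0).card : ℝ) * xP p
        ≤ 1 * xP p := by
          apply mul_le_mul_of_nonneg_right _ (hxP.1 p)
          exact_mod_cast hcard
      _ = xP p := one_mul _
  calc ∑ i : Fin (Γ + 1), payoffG (asrc Γ K) (adst Γ K) 0 2 (muScen Γ K i) xP
      = ∑ p ∈ stPaths (asrc Γ K) (adst Γ K) 0 2, ∑ i : Fin (Γ + 1),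
          max 0 (1 - ((p.countP fun e => decide (e ∈ muScen Γ K i)) : ℝ)) * xP p := by
        rw [Finset.sum_comm]
        rfl
    _ ≤ ∑ p ∈ stPaths (asrc Γ K) (adst Γ K) 0 2, xP p :=
        Finset.sum_le_sum key
    _ ≤ ((K : ℝ) + Γ) * (K : ℝ)⁻¹ := sum_xP_le hxP

lemma Z_RNIPath_ge (hK : 1 ≤ K) :
    ((Γ : ℝ) + 1)⁻¹ * ((K : ℝ) + (Γ : ℝ))⁻¹
      ≤ Z_RNIPath (asrc Γ K) (adst Γ K) 0 2 (au Γ K) Γ := by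
  apply le_csInf
  · exact ⟨_, alphaStar Γ K, isDist_alphaStar, rfl⟩
  · rintro z ⟨α, hα, rfl⟩
    have hmem : (∑ μ ∈ Scenarios (Fin (M Γ K)) Γ,
        α μ * payoffG (asrc Γ K) (adst Γ K) 0 2 μ (xPbal Γ K)) ∈ {w : ℝ | ∃ xP,
        IsPathFlow (asrc Γ K) (adst Γ K) 0 2 (au Γ K) xP ∧
        w = ∑ μ ∈ Scenarios (Fin (M Γ K)) Γ, α μ * payoffG (asrc Γ K) (adst Γ K) 0 2 μ xP} :=
      ⟨xPbal Γ K, isPathFlow_xPbal hK, rfl⟩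
    refine le_trans ?_ (le_csSup (bddAbove_RNIPinner hα) hmem)
    calc ((Γ : ℝ) + 1)⁻¹ * ((K : ℝ) + (Γ : ℝ))⁻¹
        = ∑ μ ∈ Scenarios (Fin (M Γ K)) Γ, α μ * (((Γ : ℝ) + 1)⁻¹ * ((K : ℝ) + (Γ : ℝ))⁻¹) := by
          rw [← Finset.sum_mul, hα.2.2, one_mul]
      _ ≤ _ := Finset.sum_le_sum fun μ hμ => mul_le_mul_of_nonneg_left
          (payoffG_xPbal_ge hK (le_of_eq (mem_Scenarios.1 hμ))) (hα.1 μ)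

end TightAux
/-- tightness of the factor `Γ+1`: for every `Γ ≥ 1` and `ε > 0` there is
a network with `Z_RNI > 0`, `Z_RNI^Path > 0`, `Z_NI ≥ (Γ+1-ε)·Z_RNI` and
`Z_NI ≥ (Γ+1-ε)·Z_RNI^Path`. -/
theorem tight_Gamma_add_one (Γ : ℕ) (hΓ1 : 1 ≤ Γ) (ε : ℝ) (hε : 0 < ε) :
    ∃ (n m : ℕ) (src dst : Fin m → Fin n) (s t : Fin n) (u : Fin m → ℝ),
      IsNetwork src dst s t u ∧ Γ ≤ m ∧
      0 < Z_RNI src dst s t u Γ ∧ 0 < Z_RNIPath src dst s t u Γ ∧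
      ((Γ : ℝ) + 1 - ε) * Z_RNI src dst s t u Γ ≤ Z_NI src dst s t u Γ ∧
      ((Γ : ℝ) + 1 - ε) * Z_RNIPath src dst s t u Γ ≤ Z_NI src dst s t u Γ := by
  classical
  set K : ℕ := Γ * (Γ + 1) * ⌈ε⁻¹⌉₊ with hKdef
  have hceilpos : 0 < ⌈ε⁻¹⌉₊ := Nat.ceil_pos.2 (by positivity)
  have hK : 1 ≤ K := by
    have : 0 < K := Nat.mul_pos (Nat.mul_pos (by omega) (by omega)) hceilpos
    omega
  have hKpos : (0 : ℝ) < (K : ℝ) := by exact_mod_cast hK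
  have hG0 : (0 : ℝ) < (Γ : ℝ) + 1 := by positivity
  have hεK : (Γ : ℝ) * ((Γ : ℝ) + 1) ≤ ε * (K : ℝ) := by
    have hceil : (ε⁻¹ : ℝ) ≤ (⌈ε⁻¹⌉₊ : ℝ) := Nat.le_ceil _
    have hKcast : (K : ℝ) = (Γ : ℝ) * ((Γ : ℝ) + 1) * (⌈ε⁻¹⌉₊ : ℝ) := by
      rw [hKdef]; push_cast; ring
    rw [hKcast]
    have hg : (0 : ℝ) ≤ (Γ : ℝ) * ((Γ : ℝ) + 1) := by positivity
    have h2 : (Γ : ℝ) * ((Γ : ℝ) + 1) * (ε * ε⁻¹)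
        ≤ (Γ : ℝ) * ((Γ : ℝ) + 1) * (ε * (⌈ε⁻¹⌉₊ : ℝ)) :=
      mul_le_mul_of_nonneg_left (mul_le_mul_of_nonneg_left hceil hε.le) hg
    calc (Γ : ℝ) * ((Γ : ℝ) + 1) = (Γ : ℝ) * ((Γ : ℝ) + 1) * (ε * ε⁻¹) := by
          rw [mul_inv_cancel₀ hε.ne']; ring
      _ ≤ (Γ : ℝ) * ((Γ : ℝ) + 1) * (ε * (⌈ε⁻¹⌉₊ : ℝ)) := h2
      _ = ε * ((Γ : ℝ) * ((Γ : ℝ) + 1) * (⌈ε⁻¹⌉₊ : ℝ)) := by ring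
  -- the key arithmetic bound
  have harith : ((Γ : ℝ) + 1 - ε) * (((Γ : ℝ) + 1)⁻¹ * (((K : ℝ) + Γ) * (K : ℝ)⁻¹)) ≤ 1 := by
    have h1 : ((Γ : ℝ) + 1)⁻¹ * (((K : ℝ) + Γ) * (K : ℝ)⁻¹)
        = ((K : ℝ) + Γ) / (((Γ : ℝ) + 1) * K) := by
      field_simp
    rw [h1, ← mul_div_assoc, div_le_one (by positivity)]
    nlinarith [hεK, mul_nonneg hε.le (Nat.cast_nonneg (α := ℝ) Γ), hKpos, hG0]
  refine ⟨3, TightAux.M Γ K, TightAux.asrc Γ K, TightAux.adst Γ K, 0, 2, TightAux.au Γ K,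
    ?_, ?_, ?_, ?_, ?_, ?_⟩
  · refine ⟨by decide, fun e => ?_, fun e => ?_, TightAux.au_nonneg⟩
    · unfold TightAux.adst; split <;> decide
    · unfold TightAux.asrc; split <;> decide
  · simp only [TightAux.M]; omega
  · exact lt_of_lt_of_le (by positivity : (0 : ℝ) < ((Γ : ℝ) + 1)⁻¹) (TightAux.Z_RNI_ge hK)
  · exact lt_of_lt_of_le
      (by positivity : (0 : ℝ) < ((Γ : ℝ) + 1)⁻¹ * ((K : ℝ) + (Γ : ℝ))⁻¹)
      (TightAux.Z_RNIPath_ge hK)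
  · have hZNI := TightAux.Z_NI_ge (Γ := Γ) hK
    by_cases hcase : ((Γ : ℝ) + 1 - ε) ≤ 0
    · have h0 : 0 ≤ Z_RNI (TightAux.asrc Γ K) (TightAux.adst Γ K) 0 2 (TightAux.au Γ K) Γ :=
        le_trans (by positivity) (TightAux.Z_RNI_ge hK)
      have := mul_nonpos_of_nonpos_of_nonneg hcase h0
      linarith
    · push_neg at hcase
      calc ((Γ : ℝ) + 1 - ε) * Z_RNI (TightAux.asrc Γ K) (TightAux.adst Γ K) 0 2 (TightAux.au Γ K) Γ
          ≤ ((Γ : ℝ) + 1 - ε) * (((Γ : ℝ) + 1)⁻¹ * (((K : ℝ) + Γ) * (K : ℝ)⁻¹)) :=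
            mul_le_mul_of_nonneg_left (TightAux.Z_RNI_le hK) hcase.le
        _ ≤ 1 := harith
        _ ≤ _ := hZNI
  · have hZNI := TightAux.Z_NI_ge (Γ := Γ) hK
    by_cases hcase : ((Γ : ℝ) + 1 - ε) ≤ 0
    · have h0 : 0 ≤ Z_RNIPath (TightAux.asrc Γ K) (TightAux.adst Γ K) 0 2 (TightAux.au Γ K) Γ :=
        le_trans (by positivity) (TightAux.Z_RNIPath_ge hK)
      have := mul_nonpos_of_nonpos_of_nonneg hcase h0
      linarith
    · push_neg at hcase
      calc ((Γ : ℝ) + 1 - ε) * Z_RNIPath (TightAux.asrc Γ K) (TightAux.adst Γ K) 0 2 (TightAux.au Γ K) Γ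
          ≤ ((Γ : ℝ) + 1 - ε) * (((Γ : ℝ) + 1)⁻¹ * (((K : ℝ) + Γ) * (K : ℝ)⁻¹)) :=
            mul_le_mul_of_nonneg_left (TightAux.Z_RNIPath_le hK) hcase.le
        _ ≤ 1 := harith
        _ ≤ _ := hZNI

end NetworkInterdiction
end

section
/- The factor Γ comparing arc-based and path-based randomized interdiction is tight: for every integer Γ ≥ 1 and every ε > 0, there exists a finite directed multigraph with source s, sink t, and nonnegative arc capacities such that Z_RNI^Path > 0 and Z_RNI ≥ (Γ−ε)·Z_RNI^Path. -/
open scoped BigOperators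

section NetworkInterdiction

variable {V E : Type} [Fintype V] [Fintype E] [DecidableEq V] [DecidableEq E]

section TightConstruction

variable (Γ : ℕ)

/-- number of parallel source (and sink) arcs -/
def NN : ℕ := Γ * (Γ + 1)

/-- total number of arcs -/
def MM : ℕ := NN Γ + Γ + 2 + NN Γ

def SRCf : Fin (MM Γ) → Fin 4 := fun e =>
  if e.1 < NN Γ then 0 else if e.1 < NN Γ + Γ + 1 then 1 else 2

def DSTf : Fin (MM Γ) → Fin 4 := fun e =>
  if e.1 < NN Γ then 1 else if e.1 < NN Γ + Γ + 1 then 2 else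
    if e.1 = NN Γ + Γ + 1 then 1 else 3

def UUf : Fin (MM Γ) → ℝ := fun e =>
  if e.1 < NN Γ then 1 else if e.1 < NN Γ + Γ + 1 then (NN Γ : ℝ) else
    if e.1 = NN Γ + Γ + 1 then (NN Γ : ℝ) * Γ else 1

def srcA (i : Fin (NN Γ)) : Fin (MM Γ) := ⟨i.1, by have := i.2; simp only [MM]; omega⟩
def midA (i : Fin (Γ + 1)) : Fin (MM Γ) := ⟨NN Γ + i.1, by have := i.2; simp only [MM]; omega⟩
def retA : Fin (MM Γ) := ⟨NN Γ + Γ + 1, by simp only [MM]; omega⟩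
def snkA (i : Fin (NN Γ)) : Fin (MM Γ) := ⟨NN Γ + Γ + 2 + i.1, by have := i.2; simp only [MM]; omega⟩

lemma srcA_inj : Function.Injective (srcA Γ) := by
  intro i j h; apply Fin.ext; simpa [srcA, Fin.ext_iff] using h
lemma midA_inj : Function.Injective (midA Γ) := by
  intro i j h; apply Fin.ext; simp only [midA, Fin.ext_iff] at h; omega
lemma snkA_inj : Function.Injective (snkA Γ) := by
  intro i j h; apply Fin.ext; simp only [snkA, Fin.ext_iff] at h; omega

def srcS : Finset (Fin (MM Γ)) := Finset.univ.image (srcA Γ)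
def midS : Finset (Fin (MM Γ)) := Finset.univ.image (midA Γ)
def snkS : Finset (Fin (MM Γ)) := Finset.univ.image (snkA Γ)

lemma mem_srcS {e : Fin (MM Γ)} : e ∈ srcS Γ ↔ e.1 < NN Γ := by
  simp only [srcS, Finset.mem_image, Finset.mem_univ, true_and]
  constructor
  · rintro ⟨i, rfl⟩; exact i.2
  · intro h; exact ⟨⟨e.1, h⟩, by apply Fin.ext; rfl⟩

lemma mem_midS {e : Fin (MM Γ)} : e ∈ midS Γ ↔ NN Γ ≤ e.1 ∧ e.1 < NN Γ + Γ + 1 := by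
  simp only [midS, Finset.mem_image, Finset.mem_univ, true_and]
  constructor
  · rintro ⟨i, rfl⟩; have := i.2; simp only [midA]; omega
  · rintro ⟨h1, h2⟩; exact ⟨⟨e.1 - NN Γ, by omega⟩, by apply Fin.ext; simp only [midA]; omega⟩

lemma mem_snkS {e : Fin (MM Γ)} : e ∈ snkS Γ ↔ NN Γ + Γ + 2 ≤ e.1 := by
  simp only [snkS, Finset.mem_image, Finset.mem_univ, true_and]
  constructor
  · rintro ⟨i, rfl⟩; simp only [snkA]; omega
  · intro h; have he := e.2; simp only [MM] at he
    exact ⟨⟨e.1 - (NN Γ + Γ + 2), by omega⟩, by apply Fin.ext; simp only [snkA]; omega⟩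

lemma card_srcS : (srcS Γ).card = NN Γ := by
  rw [srcS, Finset.card_image_of_injective _ (srcA_inj Γ)]; simp
lemma card_midS : (midS Γ).card = Γ + 1 := by
  rw [midS, Finset.card_image_of_injective _ (midA_inj Γ)]; simp
lemma card_snkS : (snkS Γ).card = NN Γ := by
  rw [snkS, Finset.card_image_of_injective _ (snkA_inj Γ)]; simp

-- values of SRC/DST/U on the arc classes
lemma SRC_srcA (i : Fin (NN Γ)) : SRCf Γ (srcA Γ i) = 0 := by
  simp only [SRCf]; rw [if_pos (show (srcA Γ i).1 < NN Γ from i.2)]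
lemma DST_srcA (i : Fin (NN Γ)) : DSTf Γ (srcA Γ i) = 1 := by
  simp only [DSTf]; rw [if_pos (show (srcA Γ i).1 < NN Γ from i.2)]
lemma UU_srcA (i : Fin (NN Γ)) : UUf Γ (srcA Γ i) = 1 := by
  simp only [UUf]; rw [if_pos (show (srcA Γ i).1 < NN Γ from i.2)]
lemma SRC_midA (i : Fin (Γ + 1)) : SRCf Γ (midA Γ i) = 1 := by
  have := i.2; simp only [SRCf]
  rw [if_neg (show ¬ (midA Γ i).1 < NN Γ by simp only [midA]; omega), if_pos (show (midA Γ i).1 < NN Γ + Γ + 1 by simp only [midA]; omega)]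
lemma DST_midA (i : Fin (Γ + 1)) : DSTf Γ (midA Γ i) = 2 := by
  have := i.2; simp only [DSTf]
  rw [if_neg (show ¬ (midA Γ i).1 < NN Γ by simp only [midA]; omega), if_pos (show (midA Γ i).1 < NN Γ + Γ + 1 by simp only [midA]; omega)]
lemma UU_midA (i : Fin (Γ + 1)) : UUf Γ (midA Γ i) = (NN Γ : ℝ) := by
  have := i.2; simp only [UUf]
  rw [if_neg (show ¬ (midA Γ i).1 < NN Γ by simp only [midA]; omega), if_pos (show (midA Γ i).1 < NN Γ + Γ + 1 by simp only [midA]; omega)]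
lemma SRC_retA : SRCf Γ (retA Γ) = 2 := by
  simp only [SRCf]; rw [if_neg (show ¬ (retA Γ).1 < NN Γ by simp only [retA]; omega), if_neg (show ¬ (retA Γ).1 < NN Γ + Γ + 1 by simp only [retA]; omega)]
lemma DST_retA : DSTf Γ (retA Γ) = 1 := by
  simp only [DSTf, retA]; rw [if_neg (by omega), if_neg (by omega)]; simp

lemma UU_retA : UUf Γ (retA Γ) = (NN Γ : ℝ) * Γ := by
  simp only [UUf, retA]; rw [if_neg (by omega), if_neg (by omega)]; simp

lemma SRC_snkA (i : Fin (NN Γ)) : SRCf Γ (snkA Γ i) = 2 := by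
  simp only [SRCf]; rw [if_neg (show ¬ (snkA Γ i).1 < NN Γ by simp only [snkA]; omega), if_neg (show ¬ (snkA Γ i).1 < NN Γ + Γ + 1 by simp only [snkA]; omega)]
lemma DST_snkA (i : Fin (NN Γ)) : DSTf Γ (snkA Γ i) = 3 := by
  simp only [DSTf]; rw [if_neg (show ¬ (snkA Γ i).1 < NN Γ by simp only [snkA]; omega), if_neg (show ¬ (snkA Γ i).1 < NN Γ + Γ + 1 by simp only [snkA]; omega), if_neg (show ¬ (snkA Γ i).1 = NN Γ + Γ + 1 by simp only [snkA]; omega)]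
lemma UU_snkA (i : Fin (NN Γ)) : UUf Γ (snkA Γ i) = 1 := by
  simp only [UUf]; rw [if_neg (show ¬ (snkA Γ i).1 < NN Γ by simp only [snkA]; omega), if_neg (show ¬ (snkA Γ i).1 < NN Γ + Γ + 1 by simp only [snkA]; omega), if_neg (show ¬ (snkA Γ i).1 = NN Γ + Γ + 1 by simp only [snkA]; omega)]

end TightConstruction
section TightConstruction2

variable (Γ : ℕ)

set_option linter.unreachableTactic false
set_option linter.unnecessarySeqFocus false
set_option linter.unusedTactic false

lemma DST_eq_one {e : Fin (MM Γ)} : DSTf Γ e = 1 ↔ (e.1 < NN Γ ∨ e.1 = NN Γ + Γ + 1) := by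
  simp only [DSTf]
  split_ifs with h1 h2 h3 <;> simp_all <;> first | omega | decide
lemma SRC_eq_one {e : Fin (MM Γ)} : SRCf Γ e = 1 ↔ (NN Γ ≤ e.1 ∧ e.1 < NN Γ + Γ + 1) := by
  simp only [SRCf]
  split_ifs with h1 h2 <;> simp_all <;> first | omega | decide
lemma DST_eq_two {e : Fin (MM Γ)} : DSTf Γ e = 2 ↔ (NN Γ ≤ e.1 ∧ e.1 < NN Γ + Γ + 1) := by
  simp only [DSTf]
  split_ifs with h1 h2 h3 <;> simp_all <;> first | omega | decide
lemma SRC_eq_two {e : Fin (MM Γ)} : SRCf Γ e = 2 ↔ NN Γ + Γ + 1 ≤ e.1 := by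
  simp only [SRCf]
  split_ifs with h1 h2 <;> simp_all <;> first | omega | decide
lemma DST_eq_three {e : Fin (MM Γ)} : DSTf Γ e = 3 ↔ NN Γ + Γ + 2 ≤ e.1 := by
  have he := e.2; simp only [MM] at he
  simp only [DSTf]
  split_ifs with h1 h2 h3 <;> simp_all <;> first | omega | decide

lemma eq_retA_iff {e : Fin (MM Γ)} : e = retA Γ ↔ e.1 = NN Γ + Γ + 1 := by
  rw [Fin.ext_iff]; simp [retA]

lemma retA_notmem_srcS : retA Γ ∉ srcS Γ := by
  rw [mem_srcS]; simp only [retA]; omega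
lemma retA_notmem_snkS : retA Γ ∉ snkS Γ := by
  rw [mem_snkS]; simp only [retA]; omega

lemma fil_dst1 : (Finset.univ.filter fun e => DSTf Γ e = 1) = insert (retA Γ) (srcS Γ) := by
  ext e
  simp only [Finset.mem_filter, Finset.mem_univ, true_and, Finset.mem_insert, DST_eq_one,
    mem_srcS, eq_retA_iff]
  omega
lemma fil_src1 : (Finset.univ.filter fun e => SRCf Γ e = 1) = midS Γ := by
  ext e
  simp only [Finset.mem_filter, Finset.mem_univ, true_and, SRC_eq_one, mem_midS]
lemma fil_dst2 : (Finset.univ.filter fun e => DSTf Γ e = 2) = midS Γ := by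
  ext e
  simp only [Finset.mem_filter, Finset.mem_univ, true_and, DST_eq_two, mem_midS]
lemma fil_src2 : (Finset.univ.filter fun e => SRCf Γ e = 2) = insert (retA Γ) (snkS Γ) := by
  ext e
  simp only [Finset.mem_filter, Finset.mem_univ, true_and, Finset.mem_insert, SRC_eq_two,
    mem_snkS, eq_retA_iff]
  omega
lemma fil_dst3 : (Finset.univ.filter fun e => DSTf Γ e = 3) = snkS Γ := by
  ext e
  simp only [Finset.mem_filter, Finset.mem_univ, true_and, DST_eq_three, mem_snkS]

/-- sum of an `ite (dst = v)` over all arcs, rewritten over the filter -/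
lemma sum_dst_eq (v : Fin 4) (f : Fin (MM Γ) → ℝ) :
    ∑ e : Fin (MM Γ), (if DSTf Γ e = v then f e else 0)
      = ∑ e ∈ Finset.univ.filter (fun e => DSTf Γ e = v), f e := by
  rw [Finset.sum_filter]
lemma sum_src_eq (v : Fin 4) (f : Fin (MM Γ) → ℝ) :
    ∑ e : Fin (MM Γ), (if SRCf Γ e = v then f e else 0)
      = ∑ e ∈ Finset.univ.filter (fun e => SRCf Γ e = v), f e := by
  rw [Finset.sum_filter]

lemma IsNetwork_tc : IsNetwork (SRCf Γ) (DSTf Γ) (0 : Fin 4) 3 (UUf Γ) := by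
  refine ⟨by decide, ?_, ?_, ?_⟩
  · intro e; simp only [DSTf]; split_ifs <;> decide
  · intro e; simp only [SRCf]; split_ifs <;> decide
  · intro e; simp only [UUf]; split_ifs <;> positivity

lemma conserves_UU : Conserves (SRCf Γ) (DSTf Γ) (0 : Fin 4) 3 (UUf Γ) := by
  have c1 : ∑ e : Fin (MM Γ), (if DSTf Γ e = 1 then UUf Γ e else 0)
      = ∑ e : Fin (MM Γ), (if SRCf Γ e = 1 then UUf Γ e else 0) := by
    rw [sum_dst_eq, sum_src_eq, fil_dst1, fil_src1,
      Finset.sum_insert (retA_notmem_srcS Γ), UU_retA]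
    rw [srcS, Finset.sum_image (fun a _ b _ h => srcA_inj Γ h),
      midS, Finset.sum_image (fun a _ b _ h => midA_inj Γ h)]
    simp only [UU_srcA, UU_midA, Finset.sum_const, Finset.card_univ, Fintype.card_fin,
      nsmul_eq_mul, mul_one]
    push_cast; ring
  have c2 : ∑ e : Fin (MM Γ), (if DSTf Γ e = 2 then UUf Γ e else 0)
      = ∑ e : Fin (MM Γ), (if SRCf Γ e = 2 then UUf Γ e else 0) := by
    rw [sum_dst_eq, sum_src_eq, fil_dst2, fil_src2,
      Finset.sum_insert (retA_notmem_snkS Γ), UU_retA]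
    rw [snkS, Finset.sum_image (fun a _ b _ h => snkA_inj Γ h),
      midS, Finset.sum_image (fun a _ b _ h => midA_inj Γ h)]
    simp only [UU_snkA, UU_midA, Finset.sum_const, Finset.card_univ, Fintype.card_fin,
      nsmul_eq_mul, mul_one]
    push_cast; ring
  intro v h0 h3
  have hv : v = 1 ∨ v = 2 := by
    have h4 := v.2
    simp only [Fin.ext_iff] at h0 h3 ⊢
    omega
  rcases hv with rfl | rfl
  · exact c1
  · exact c2

lemma IsFlow_UU : IsFlow (SRCf Γ) (DSTf Γ) (0 : Fin 4) 3 (UUf Γ) (UUf Γ) :=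
  ⟨(IsNetwork_tc Γ).2.2.2, fun e => le_refl _, conserves_UU Γ⟩

end TightConstruction2
section TightConstruction3

set_option linter.unreachableTactic false
set_option linter.unnecessarySeqFocus false
set_option linter.unusedTactic false

variable (Γ : ℕ)

lemma SRC_eq_zero {e : Fin (MM Γ)} : SRCf Γ e = 0 ↔ e.1 < NN Γ := by
  simp only [SRCf]
  split_ifs with h1 h2 <;> simp_all <;> first | omega | decide

/-- generic membership lemma for `stPaths` -/
lemma mem_stPaths {V' E' : Type} [Fintype V'] [Fintype E'] [DecidableEq V'] [DecidableEq E']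
    (src dst : E' → V') (s t : V') {p : List E'} :
    p ∈ stPaths src dst s t ↔ p.Nodup ∧ IsSTPath src dst s t p := by
  classical
  simp only [stPaths, Finset.mem_filter, Finset.mem_image]
  constructor
  · rintro ⟨⟨x, -, rfl⟩, h2⟩; exact ⟨x.2, h2⟩
  · rintro ⟨h1, h2⟩; exact ⟨⟨⟨p, h1⟩, Finset.mem_univ _, rfl⟩, h2⟩

/-- crossing lemma: a chain starting in `P` and ending outside `P` has an arc
leaving `P`. -/
lemma exists_cross {E' V' : Type} (src dst : E' → V') (P : V' → Prop) :
    ∀ p : List E', p ≠ [] → p.Chain' (fun e f => dst e = src f) →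
    (∀ e ∈ p.head?, P (src e)) → (∀ e ∈ p.getLast?, ¬ P (dst e)) →
    ∃ e ∈ p, P (src e) ∧ ¬ P (dst e)
  | [] => by simp
  | [e] => by
      intro _ _ hh hl
      exact ⟨e, by simp, hh e (by simp), hl e (by simp)⟩
  | e :: f :: r => by
      intro _ hch hh hl
      by_cases hPd : P (dst e)
      · obtain ⟨he, hcr⟩ := List.isChain_cons_cons.1 hch
        obtain ⟨x, hx, h1, h2⟩ := exists_cross src dst P (f :: r) (by simp) hcr
          (by intro g hg; simp at hg; subst hg; rw [← he]; exact hPd)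
          (by intro g hg; exact hl g (by rw [List.getLast?_cons_cons]; exact hg))
        exact ⟨x, List.mem_cons_of_mem _ hx, h1, h2⟩
      · exact ⟨e, by simp, hh e (by simp), hPd⟩

/-- every s-t path contains a middle arc -/
lemma exists_mid {p : List (Fin (MM Γ))}
    (hp : p ∈ stPaths (SRCf Γ) (DSTf Γ) (0 : Fin 4) 3) :
    ∃ j : Fin (Γ + 1), midA Γ j ∈ p := by
  rw [mem_stPaths] at hp
  obtain ⟨-, hne, hh, hl, hch, -⟩ := hp
  obtain ⟨e, he, h1, h2⟩ := exists_cross (SRCf Γ) (DSTf Γ)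
    (fun v => v = 0 ∨ v = 1) p hne hch
    (by intro g hg; left; exact hh g hg)
    (by intro g hg; rw [hl g hg]; rintro (h | h) <;> exact absurd h (by decide))
  have hSub : NN Γ ≤ e.1 ∧ e.1 < NN Γ + Γ + 1 := by
    rcases h1 with h1 | h1
    · rw [SRC_eq_zero] at h1
      exact absurd (DST_eq_one Γ |>.2 (Or.inl h1)) (fun hc => h2 (Or.inr hc))
    · exact (SRC_eq_one Γ).1 h1
  refine ⟨⟨e.1 - NN Γ, by omega⟩, ?_⟩
  have : midA Γ ⟨e.1 - NN Γ, by omega⟩ = e := by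
    apply Fin.ext; simp only [midA]; omega
  rw [this]; exact he

variable (hΓ : 1 ≤ Γ)

def embN (i : Fin (Γ + 1)) : Fin (NN Γ) :=
  ⟨i.1, by
    have h2 := i.2
    have : Γ + 1 ≤ Γ * (Γ + 1) := Nat.le_mul_of_pos_left _ hΓ
    simp only [NN]; omega⟩

def PlL (i : Fin (Γ + 1)) : List (Fin (MM Γ)) :=
  [srcA Γ (embN Γ hΓ i), midA Γ i, snkA Γ (embN Γ hΓ i)]

lemma PlL_nodup (i : Fin (Γ + 1)) : (PlL Γ hΓ i).Nodup := by
  simp only [PlL, List.nodup_cons, List.mem_cons, List.mem_singleton, List.not_mem_nil,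
    or_false, List.nodup_nil, and_true, not_or, not_false_eq_true]
  refine ⟨⟨?_, ?_⟩, ?_⟩ <;>
    · intro h
      rw [Fin.ext_iff] at h
      simp only [srcA, midA, snkA, embN] at h
      have := (embN Γ hΓ i).2
      simp only [embN] at this
      omega

lemma PlL_disj {e : Fin (MM Γ)} {i j : Fin (Γ + 1)}
    (h1 : e ∈ PlL Γ hΓ i) (h2 : e ∈ PlL Γ hΓ j) : i = j := by
  have hi := (embN Γ hΓ i).2
  have hj := (embN Γ hΓ j).2
  simp only [embN] at hi hj
  simp only [PlL, List.mem_cons, List.mem_singleton, List.not_mem_nil, or_false] at h1 h2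
  apply Fin.ext
  rcases h1 with rfl | rfl | rfl <;>
    { rcases h2 with h2 | h2 | h2 <;>
      · rw [Fin.ext_iff] at h2
        simp only [srcA, midA, snkA, embN] at h2
        omega }

lemma PlL_mem_stPaths (i : Fin (Γ + 1)) :
    PlL Γ hΓ i ∈ stPaths (SRCf Γ) (DSTf Γ) (0 : Fin 4) 3 := by
  rw [mem_stPaths]
  refine ⟨PlL_nodup Γ hΓ i, ?_, ?_, ?_, ?_, ?_⟩
  · simp [PlL]
  · intro e he
    simp only [PlL, List.head?_cons, Option.mem_some_iff] at he
    subst he; exact SRC_srcA Γ _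
  · intro e he
    simp only [PlL, List.getLast?] at he
    simp only [Option.mem_some_iff] at he
    subst he; exact DST_snkA Γ _
  · simp only [PlL, List.isChain_cons_cons, List.isChain_singleton, and_true]
    exact List.isChain_cons_cons.2 ⟨by rw [DST_srcA, SRC_midA], List.isChain_cons_cons.2 ⟨by rw [DST_midA, SRC_snkA], List.isChain_singleton _⟩⟩
  · simp only [PlL, List.map_cons, List.map_nil, SRC_srcA, SRC_midA, SRC_snkA]
    decide

lemma PlL_free (μ : Finset (Fin (MM Γ))) (hμ : μ.card = Γ) :
    ∃ i : Fin (Γ + 1), ∀ e ∈ PlL Γ hΓ i, e ∉ μ := by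
  by_contra hcon
  push_neg at hcon
  choose F hF1 hF2 using hcon
  have hinj : Function.Injective F := by
    intro i j hij
    exact PlL_disj Γ hΓ (hF1 i) (hij ▸ hF1 j)
  have hsub : Finset.univ.image F ⊆ μ := by
    intro e he
    obtain ⟨i, -, rfl⟩ := Finset.mem_image.1 he
    exact hF2 i
  have := Finset.card_le_card hsub
  rw [Finset.card_image_of_injective _ hinj, Finset.card_univ, Fintype.card_fin, hμ] at this
  omega

end TightConstruction3
section TightConstruction4

set_option linter.unreachableTactic false
set_option linter.unnecessarySeqFocus false
set_option linter.unusedTactic false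

variable (Γ : ℕ)

def μiS (i : Fin (Γ + 1)) : Finset (Fin (MM Γ)) := (midS Γ).erase (midA Γ i)

lemma midA_mem_midS (i : Fin (Γ + 1)) : midA Γ i ∈ midS Γ :=
  Finset.mem_image_of_mem _ (Finset.mem_univ i)

lemma card_μiS (i : Fin (Γ + 1)) : (μiS Γ i).card = Γ := by
  rw [μiS, Finset.card_erase_of_mem (midA_mem_midS Γ i), card_midS]
  omega

lemma μiS_mem_scen (i : Fin (Γ + 1)) : μiS Γ i ∈ Scenarios (Fin (MM Γ)) Γ := by
  rw [Scenarios, Finset.mem_filter]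
  exact ⟨Finset.mem_univ _, card_μiS Γ i⟩

lemma μiS_inj : Function.Injective (μiS Γ) := by
  intro i j hij
  by_contra hne
  have h1 : midA Γ j ∈ μiS Γ i := by
    rw [μiS, Finset.mem_erase]
    exact ⟨fun hc => hne (midA_inj Γ hc).symm, midA_mem_midS Γ j⟩
  rw [hij, μiS, Finset.mem_erase] at h1
  exact h1.1 rfl

def Tset : Finset (Finset (Fin (MM Γ))) := Finset.univ.image (μiS Γ)

noncomputable def αstar : Finset (Fin (MM Γ)) → ℝ :=
  fun μ => if μ ∈ Tset Γ then ((Γ : ℝ) + 1)⁻¹ else 0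

lemma Tset_subset_scen : Tset Γ ⊆ Scenarios (Fin (MM Γ)) Γ := by
  intro μ hμ
  obtain ⟨i, -, rfl⟩ := Finset.mem_image.1 hμ
  exact μiS_mem_scen Γ i

lemma card_Tset : (Tset Γ).card = Γ + 1 := by
  rw [Tset, Finset.card_image_of_injective _ (μiS_inj Γ), Finset.card_univ, Fintype.card_fin]

lemma isDist_αstar : IsDist (Fin (MM Γ)) Γ (αstar Γ) := by
  refine ⟨fun μ => ?_, fun μ hμ => ?_, ?_⟩
  · rw [αstar]; split_ifs
    · positivity
    · exact le_refl 0
  · rw [αstar, if_neg]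
    intro hc; exact hμ (Tset_subset_scen Γ hc)
  · rw [← Finset.sum_filter_add_sum_filter_not (Scenarios (Fin (MM Γ)) Γ) (· ∈ Tset Γ)]
    have h1 : (Scenarios (Fin (MM Γ)) Γ).filter (· ∈ Tset Γ) = Tset Γ := by
      ext μ
      rw [Finset.mem_filter]
      exact ⟨fun h => h.2, fun h => ⟨Tset_subset_scen Γ h, h⟩⟩
    have h2 : ∀ μ ∈ (Scenarios (Fin (MM Γ)) Γ).filter (¬ · ∈ Tset Γ), αstar Γ μ = 0 := by
      intro μ hμ
      rw [Finset.mem_filter] at hμ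
      rw [αstar, if_neg hμ.2]
    rw [Finset.sum_eq_zero h2, add_zero, h1]
    have h3 : ∀ μ ∈ Tset Γ, αstar Γ μ = ((Γ : ℝ) + 1)⁻¹ := by
      intro μ hμ; rw [αstar, if_pos hμ]
    rw [Finset.sum_congr rfl h3, Finset.sum_const, card_Tset, nsmul_eq_mul]
    have : ((Γ : ℝ) + 1) ≠ 0 := by positivity
    push_cast
    field_simp
  
end TightConstruction4
section TightConstruction5

set_option linter.unreachableTactic false
set_option linter.unnecessarySeqFocus false
set_option linter.unusedTactic false

variable (Γ : ℕ)

lemma one_le_UU (hΓ : 1 ≤ Γ) (e : Fin (MM Γ)) : 1 ≤ UUf Γ e := by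
  have hN : 1 ≤ NN Γ := by simp only [NN]; nlinarith
  simp only [UUf]
  split_ifs
  · exact le_refl 1
  · exact_mod_cast hN
  · have : (1 : ℝ) ≤ (NN Γ : ℝ) := by exact_mod_cast hN
    have h2 : (1 : ℝ) ≤ (Γ : ℝ) := by exact_mod_cast hΓ
    nlinarith
  · exact le_refl 1

variable (hΓ : 1 ≤ Γ)

noncomputable def xPstar : List (Fin (MM Γ)) → ℝ :=
  fun p => if p ∈ Finset.univ.image (PlL Γ hΓ) then 1 else 0

lemma xPstar_nonneg (p : List (Fin (MM Γ))) : 0 ≤ xPstar Γ hΓ p := by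
  rw [xPstar]; split_ifs <;> norm_num

lemma isPathFlow_xPstar :
    IsPathFlow (SRCf Γ) (DSTf Γ) (0 : Fin 4) 3 (UUf Γ) (xPstar Γ hΓ) := by
  refine ⟨xPstar_nonneg Γ hΓ, ?_, ?_⟩
  · intro p hp
    rw [xPstar, if_neg]
    intro hc
    obtain ⟨i, -, rfl⟩ := Finset.mem_image.1 hc
    exact hp (PlL_mem_stPaths Γ hΓ i)
  · intro e
    set ST := stPaths (SRCf Γ) (DSTf Γ) (0 : Fin 4) (3 : Fin 4) with hST
    set T' := (Finset.univ.image (PlL Γ hΓ)).filter (fun q => e ∈ q) with hT'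
    have hb : ∀ p ∈ ST, (if e ∈ p then xPstar Γ hΓ p else 0)
        ≤ (if p ∈ T' then (1 : ℝ) else 0) := by
      intro p hp
      by_cases h1 : e ∈ p
      · rw [if_pos h1, xPstar]
        by_cases h2 : p ∈ Finset.univ.image (PlL Γ hΓ)
        · have hmemT : p ∈ T' := by
            rw [hT']
            simp only [Finset.mem_filter]
            exact ⟨h2, h1⟩
          rw [if_pos h2, if_pos hmemT]
        · rw [if_neg h2]; split_ifs <;> norm_num
      · rw [if_neg h1]; split_ifs <;> norm_num
    calc ∑ p ∈ ST, (if e ∈ p then xPstar Γ hΓ p else 0)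
        ≤ ∑ p ∈ ST, (if p ∈ T' then (1 : ℝ) else 0) := Finset.sum_le_sum hb
      _ = ∑ p ∈ ST.filter (· ∈ T'), (1 : ℝ) := by rw [Finset.sum_filter]
      _ = (ST.filter (· ∈ T')).card := by rw [Finset.sum_const, nsmul_eq_mul, mul_one]
      _ ≤ (T'.card : ℝ) := by
          exact_mod_cast Nat.cast_le.2 (Finset.card_le_card (fun q hq =>
            (Finset.mem_filter.1 hq).2))
      _ ≤ 1 := by
          have : T'.card ≤ 1 := by
            rw [Finset.card_le_one]
            intro q1 hq1 q2 hq2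
            obtain ⟨hq1', he1⟩ := Finset.mem_filter.1 hq1
            obtain ⟨hq2', he2⟩ := Finset.mem_filter.1 hq2
            obtain ⟨i1, -, rfl⟩ := Finset.mem_image.1 hq1'
            obtain ⟨i2, -, rfl⟩ := Finset.mem_image.1 hq2'
            rw [PlL_disj Γ hΓ he1 he2]
          exact_mod_cast this
      _ ≤ UUf Γ e := one_le_UU Γ hΓ e

lemma payoffG_xPstar_ge (μ : Finset (Fin (MM Γ))) (hμ : μ.card = Γ) :
    1 ≤ payoffG (SRCf Γ) (DSTf Γ) (0 : Fin 4) 3 μ (xPstar Γ hΓ) := by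
  obtain ⟨i, hi⟩ := PlL_free Γ hΓ μ hμ
  rw [payoffG]
  have hmem : PlL Γ hΓ i ∈ stPaths (SRCf Γ) (DSTf Γ) (0 : Fin 4) 3 :=
    PlL_mem_stPaths Γ hΓ i
  have hterm : max 0 (1 - (((PlL Γ hΓ i).countP fun e => decide (e ∈ μ)) : ℝ))
      * xPstar Γ hΓ (PlL Γ hΓ i) = 1 := by
    have hc : (PlL Γ hΓ i).countP (fun e => decide (e ∈ μ)) = 0 := by
      rw [List.countP_eq_zero]
      intro e he
      simpa using hi e he
    rw [hc, xPstar, if_pos (Finset.mem_image_of_mem _ (Finset.mem_univ i))]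
    norm_num
  calc (1 : ℝ) = max 0 (1 - (((PlL Γ hΓ i).countP fun e => decide (e ∈ μ)) : ℝ))
      * xPstar Γ hΓ (PlL Γ hΓ i) := hterm.symm
    _ ≤ _ := Finset.single_le_sum (f := fun p =>
        max 0 (1 - ((p.countP fun e => decide (e ∈ μ)) : ℝ)) * xPstar Γ hΓ p)
        (fun p _ => mul_nonneg (le_max_left _ _) (xPstar_nonneg Γ hΓ p)) hmem

/-- total value of any path flow is at most `NN Γ` -/
lemma tot_path_le (xP : List (Fin (MM Γ)) → ℝ)
    (h : IsPathFlow (SRCf Γ) (DSTf Γ) (0 : Fin 4) 3 (UUf Γ) xP) :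
    ∑ p ∈ stPaths (SRCf Γ) (DSTf Γ) (0 : Fin 4) 3, xP p ≤ (NN Γ : ℝ) := by
  obtain ⟨h0, hsup, hcap⟩ := h
  set ST := stPaths (SRCf Γ) (DSTf Γ) (0 : Fin 4) (3 : Fin 4) with hST
  have hsink : ∀ p ∈ ST, ∃ e ∈ snkS Γ, e ∈ p := by
    intro p hp
    rw [hST, mem_stPaths] at hp
    obtain ⟨-, hne, -, hl, -, -⟩ := hp
    refine ⟨p.getLast hne, ?_, List.getLast_mem hne⟩
    rw [mem_snkS, ← DST_eq_three]
    exact hl _ (List.getLast?_eq_getLast hne ▸ rfl)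
  calc ∑ p ∈ ST, xP p ≤ ∑ p ∈ ST, ∑ e ∈ snkS Γ, (if e ∈ p then xP p else 0) := by
        refine Finset.sum_le_sum ?_
        intro p hp
        obtain ⟨e, heS, hep⟩ := hsink p hp
        calc xP p = (if e ∈ p then xP p else 0) := by rw [if_pos hep]
          _ ≤ ∑ e' ∈ snkS Γ, (if e' ∈ p then xP p else 0) :=
            Finset.single_le_sum (f := fun e' => if e' ∈ p then xP p else 0)
              (fun e' _ => by split_ifs; exacts [h0 p, le_refl 0]) heS
    _ = ∑ e ∈ snkS Γ, ∑ p ∈ ST, (if e ∈ p then xP p else 0) := Finset.sum_comm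
    _ ≤ ∑ e ∈ snkS Γ, UUf Γ e := Finset.sum_le_sum (fun e _ => hcap e)
    _ = (NN Γ : ℝ) := by
        rw [snkS, Finset.sum_image (fun a _ b _ h => snkA_inj Γ h)]
        simp [UU_snkA]

lemma payoffG_nonneg (μ : Finset (Fin (MM Γ))) (xP : List (Fin (MM Γ)) → ℝ)
    (h0 : ∀ p, 0 ≤ xP p) :
    0 ≤ payoffG (SRCf Γ) (DSTf Γ) (0 : Fin 4) 3 μ xP :=
  Finset.sum_nonneg (fun p _ => mul_nonneg (le_max_left _ _) (h0 p))

lemma payoffG_le (μ : Finset (Fin (MM Γ))) (xP : List (Fin (MM Γ)) → ℝ)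
    (h : IsPathFlow (SRCf Γ) (DSTf Γ) (0 : Fin 4) 3 (UUf Γ) xP) :
    payoffG (SRCf Γ) (DSTf Γ) (0 : Fin 4) 3 μ xP ≤ (NN Γ : ℝ) := by
  calc payoffG (SRCf Γ) (DSTf Γ) (0 : Fin 4) 3 μ xP
      ≤ ∑ p ∈ stPaths (SRCf Γ) (DSTf Γ) (0 : Fin 4) 3, xP p := by
        refine Finset.sum_le_sum ?_
        intro p _
        have h1 : max 0 (1 - ((p.countP fun e => decide (e ∈ μ)) : ℝ)) ≤ 1 := by
          apply max_le (by norm_num)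
          have : (0 : ℝ) ≤ ((p.countP fun e => decide (e ∈ μ)) : ℝ) := Nat.cast_nonneg _
          linarith
        calc max 0 (1 - ((p.countP fun e => decide (e ∈ μ)) : ℝ)) * xP p
            ≤ 1 * xP p := mul_le_mul_of_nonneg_right h1 (h.1 p)
          _ = xP p := one_mul _
    _ ≤ (NN Γ : ℝ) := tot_path_le Γ xP h

/-- key lemma: for every s-t path, at most one of the scenarios `μiS i` misses it -/
lemma sum_max_le (p : List (Fin (MM Γ)))
    (hp : p ∈ stPaths (SRCf Γ) (DSTf Γ) (0 : Fin 4) 3) :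
    ∑ i : Fin (Γ + 1), max 0 (1 - ((p.countP fun e => decide (e ∈ μiS Γ i)) : ℝ)) ≤ 1 := by
  obtain ⟨j, hj⟩ := exists_mid Γ hp
  have hzero : ∀ i : Fin (Γ + 1), i ≠ j →
      max 0 (1 - ((p.countP fun e => decide (e ∈ μiS Γ i)) : ℝ)) = 0 := by
    intro i hij
    have hc : 0 < p.countP (fun e => decide (e ∈ μiS Γ i)) := by
      rw [List.countP_pos_iff]
      refine ⟨midA Γ j, hj, ?_⟩
      simp only [decide_eq_true_eq, μiS, Finset.mem_erase]
      exact ⟨fun hc => hij (midA_inj Γ hc).symm, midA_mem_midS Γ j⟩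
    have hc' : (1 : ℝ) ≤ ((p.countP fun e => decide (e ∈ μiS Γ i)) : ℝ) := by
      exact_mod_cast hc
    rw [max_eq_left (by linarith)]
  calc ∑ i : Fin (Γ + 1), max 0 (1 - ((p.countP fun e => decide (e ∈ μiS Γ i)) : ℝ))
      ≤ ∑ i : Fin (Γ + 1), (if i = j then (1 : ℝ) else 0) := by
        refine Finset.sum_le_sum ?_
        intro i _
        by_cases hij : i = j
        · rw [if_pos hij]
          apply max_le (by norm_num)
          have : (0 : ℝ) ≤ ((p.countP fun e => decide (e ∈ μiS Γ i)) : ℝ) := Nat.cast_nonneg _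
          linarith
        · rw [if_neg hij, hzero i hij]
    _ = 1 := by rw [Finset.sum_ite_eq' Finset.univ j (fun _ => (1 : ℝ)), if_pos (Finset.mem_univ j)]

end TightConstruction5
section TightConstruction6

set_option linter.unreachableTactic false
set_option linter.unnecessarySeqFocus false
set_option linter.unusedTactic false

variable (Γ : ℕ)

lemma UU_of_mem_srcS {e : Fin (MM Γ)} (h : e ∈ srcS Γ) : UUf Γ e = 1 := by
  rw [mem_srcS] at h; rw [UUf, if_pos h]
lemma UU_of_mem_midS {e : Fin (MM Γ)} (h : e ∈ midS Γ) : UUf Γ e = (NN Γ : ℝ) := by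
  rw [mem_midS] at h; rw [UUf, if_neg (by omega), if_pos (by omega)]
lemma UU_of_mem_snkS {e : Fin (MM Γ)} (h : e ∈ snkS Γ) : UUf Γ e = 1 := by
  rw [mem_snkS] at h; rw [UUf, if_neg (by omega), if_neg (by omega), if_neg (by omega)]

lemma UU_nonneg (e : Fin (MM Γ)) : 0 ≤ UUf Γ e := (IsNetwork_tc Γ).2.2.2 e

/-- any admissible response flow has value at most `NN Γ` -/
lemma flowVal_le_NN (μ : Finset (Fin (MM Γ))) (x y : Fin (MM Γ)) :
    True := trivial

lemma payoffF_mem_le (μ : Finset (Fin (MM Γ))) (x : Fin (MM Γ) → ℝ)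
    (hx : ∀ e, x e ≤ UUf Γ e) {z : ℝ}
    (hz : z ∈ {z : ℝ | ∃ y : Fin (MM Γ) → ℝ, (∀ e, 0 ≤ y e) ∧ (∀ e ∉ μ, y e ≤ x e) ∧
      (∀ e ∈ μ, y e = 0) ∧ Conserves (SRCf Γ) (DSTf Γ) (0 : Fin 4) 3 y ∧
      z = flowVal (DSTf Γ) 3 y}) : z ≤ (NN Γ : ℝ) := by
  obtain ⟨y, hy0, hyle, hyμ, -, rfl⟩ := hz
  have hyU : ∀ e, y e ≤ UUf Γ e := by
    intro e
    by_cases he : e ∈ μ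
    · rw [hyμ e he]; exact UU_nonneg Γ e
    · exact le_trans (hyle e he) (hx e)
  rw [flowVal, sum_dst_eq, fil_dst3]
  calc ∑ e ∈ snkS Γ, y e ≤ ∑ e ∈ snkS Γ, UUf Γ e :=
        Finset.sum_le_sum (fun e _ => hyU e)
    _ = (NN Γ : ℝ) := by
        rw [snkS, Finset.sum_image (fun a _ b _ h => snkA_inj Γ h)]
        simp [UU_snkA]

lemma payoffF_bddAbove (μ : Finset (Fin (MM Γ))) (x : Fin (MM Γ) → ℝ)
    (hx : ∀ e, x e ≤ UUf Γ e) :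
    BddAbove {z : ℝ | ∃ y : Fin (MM Γ) → ℝ, (∀ e, 0 ≤ y e) ∧ (∀ e ∉ μ, y e ≤ x e) ∧
      (∀ e ∈ μ, y e = 0) ∧ Conserves (SRCf Γ) (DSTf Γ) (0 : Fin 4) 3 y ∧
      z = flowVal (DSTf Γ) 3 y} :=
  ⟨(NN Γ : ℝ), fun z hz => payoffF_mem_le Γ μ x hx hz⟩

lemma payoffF_le (μ : Finset (Fin (MM Γ))) (x : Fin (MM Γ) → ℝ)
    (hx : ∀ e, x e ≤ UUf Γ e) :
    payoffF (SRCf Γ) (DSTf Γ) (0 : Fin 4) 3 μ x ≤ (NN Γ : ℝ) := by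
  rw [payoffF]
  apply Real.sSup_le (fun z hz => payoffF_mem_le Γ μ x hx hz) (Nat.cast_nonneg _)

lemma payoffF_nonneg (μ : Finset (Fin (MM Γ))) (x : Fin (MM Γ) → ℝ)
    (hx0 : ∀ e, 0 ≤ x e) (hx : ∀ e, x e ≤ UUf Γ e) :
    0 ≤ payoffF (SRCf Γ) (DSTf Γ) (0 : Fin 4) 3 μ x := by
  rw [payoffF]
  apply le_csSup (payoffF_bddAbove Γ μ x hx)
  refine ⟨fun _ => 0, fun e => le_refl 0, fun e _ => hx0 e, fun e _ => rfl, ?_, ?_⟩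
  · intro v h0 h3; simp
  · rw [flowVal]; simp

/-- the key adaptive lower bound: the saturating flow retains value `NN Γ - Γ`
against every interdiction of `Γ` arcs -/
lemma payoffF_UU_ge (μ : Finset (Fin (MM Γ))) (hμ : μ.card = Γ) :
    ((NN Γ - Γ : ℕ) : ℝ) ≤ payoffF (SRCf Γ) (DSTf Γ) (0 : Fin 4) 3 μ (UUf Γ) := by
  set KK := NN Γ - Γ with hKK
  -- surviving source arcs
  have hcard_src : KK ≤ (srcS Γ \ μ).card := by
    have h1 := Finset.le_card_sdiff μ (srcS Γ)
    rw [card_srcS, hμ] at h1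
    exact h1
  have hcard_snk : KK ≤ (snkS Γ \ μ).card := by
    have h1 := Finset.le_card_sdiff μ (snkS Γ)
    rw [card_snkS, hμ] at h1
    exact h1
  obtain ⟨SA, hSA_sub, hSA_card⟩ := Finset.exists_subset_card_eq hcard_src
  obtain ⟨SB, hSB_sub, hSB_card⟩ := Finset.exists_subset_card_eq hcard_snk
  have hSA_src : SA ⊆ srcS Γ := hSA_sub.trans (Finset.sdiff_subset)
  have hSB_snk : SB ⊆ snkS Γ := hSB_sub.trans (Finset.sdiff_subset)
  -- a surviving middle arc
  have hi0 : ∃ i0 : Fin (Γ + 1), midA Γ i0 ∉ μ := by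
    by_contra hcon
    push_neg at hcon
    have hsub : midS Γ ⊆ μ := by
      intro e he
      obtain ⟨i, -, rfl⟩ := Finset.mem_image.1 he
      exact hcon i
    have := Finset.card_le_card hsub
    rw [card_midS, hμ] at this
    omega
  obtain ⟨i0, hi0⟩ := hi0
  set y : Fin (MM Γ) → ℝ := fun e =>
    if e ∈ SA then 1 else if e ∈ SB then 1 else if e = midA Γ i0 then (KK : ℝ) else 0
    with hy
  have hKnn : (0 : ℝ) ≤ (KK : ℝ) := Nat.cast_nonneg _
  -- basic disjointness facts
  have hnotSA : ∀ e : Fin (MM Γ), ¬ (e.1 < NN Γ) → e ∉ SA := by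
    intro e he hc
    exact he ((mem_srcS Γ).1 (hSA_src hc))
  have hnotSB : ∀ e : Fin (MM Γ), ¬ (NN Γ + Γ + 2 ≤ e.1) → e ∉ SB := by
    intro e he hc
    exact he ((mem_snkS Γ).1 (hSB_snk hc))
  have hy_mid : y (midA Γ i0) = (KK : ℝ) := by
    simp only [hy]
    have h1 : ¬ ((midA Γ i0).1 < NN Γ) := by simp only [midA]; omega
    have h2 : ¬ (NN Γ + Γ + 2 ≤ (midA Γ i0).1) := by
      have := i0.2; simp only [midA]; omega
    rw [if_neg (hnotSA _ h1), if_neg (hnotSB _ h2)]; simp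
  have hy_ret : y (retA Γ) = 0 := by
    simp only [hy]
    have h1 : ¬ ((retA Γ).1 < NN Γ) := by simp only [retA]; omega
    have h2 : ¬ (NN Γ + Γ + 2 ≤ (retA Γ).1) := by simp only [retA]; omega
    have h3 : retA Γ ≠ midA Γ i0 := by
      simp only [ne_eq, Fin.ext_iff, retA, midA]; have := i0.2; omega
    rw [if_neg (hnotSA _ h1), if_neg (hnotSB _ h2), if_neg h3]
  have hy_srcS : ∑ e ∈ srcS Γ, y e = (KK : ℝ) := by
    rw [← Finset.sum_subset hSA_src]
    · rw [Finset.sum_congr rfl (fun e he => by simp only [hy]; exact if_pos he),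
        Finset.sum_const, hSA_card, nsmul_eq_mul, mul_one]
    · intro e heS heA
      simp only [hy]; rw [if_neg heA, if_neg, if_neg]
      · simp only [ne_eq, Fin.ext_iff, midA]
        have := (mem_srcS Γ).1 heS
        omega
      · apply hnotSB
        have := (mem_srcS Γ).1 heS
        have he2 := e.2; simp only [MM] at he2
        omega
  have hy_snkS : ∑ e ∈ snkS Γ, y e = (KK : ℝ) := by
    rw [← Finset.sum_subset hSB_snk]
    · rw [Finset.sum_congr rfl (fun e he => ?_), Finset.sum_const, hSB_card,
        nsmul_eq_mul, mul_one]
      have heA : e ∉ SA := by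
        apply hnotSA
        have := (mem_snkS Γ).1 (hSB_snk he)
        omega
      simp only [hy]; rw [if_neg heA, if_pos he]
    · intro e heS heB
      have h1 : e ∉ SA := by
        apply hnotSA
        have := (mem_snkS Γ).1 heS
        omega
      simp only [hy]; rw [if_neg h1, if_neg heB, if_neg]
      simp only [ne_eq, Fin.ext_iff, midA]
      have := (mem_snkS Γ).1 heS
      have hi2 := i0.2
      omega
  have hy_midS : ∑ e ∈ midS Γ, y e = (KK : ℝ) := by
    rw [Finset.sum_eq_single (midA Γ i0)]
    · exact hy_mid
    · intro b hb hne
      have h1 : b ∉ SA := by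
        apply hnotSA
        have := (mem_midS Γ).1 hb
        omega
      have h2 : b ∉ SB := by
        apply hnotSB
        have := (mem_midS Γ).1 hb
        omega
      simp only [hy]; rw [if_neg h1, if_neg h2, if_neg hne]
    · intro hc
      exact absurd (midA_mem_midS Γ i0) hc
  have hy_cons : Conserves (SRCf Γ) (DSTf Γ) (0 : Fin 4) 3 y := by
    have c1 : ∑ e : Fin (MM Γ), (if DSTf Γ e = 1 then y e else 0)
        = ∑ e : Fin (MM Γ), (if SRCf Γ e = 1 then y e else 0) := by
      rw [sum_dst_eq, sum_src_eq, fil_dst1, fil_src1,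
        Finset.sum_insert (retA_notmem_srcS Γ), hy_ret, hy_srcS, hy_midS, zero_add]
    have c2 : ∑ e : Fin (MM Γ), (if DSTf Γ e = 2 then y e else 0)
        = ∑ e : Fin (MM Γ), (if SRCf Γ e = 2 then y e else 0) := by
      rw [sum_dst_eq, sum_src_eq, fil_dst2, fil_src2,
        Finset.sum_insert (retA_notmem_snkS Γ), hy_ret, hy_snkS, hy_midS, zero_add]
    intro v h0 h3
    have hv : v = 1 ∨ v = 2 := by
      have h4 := v.2
      simp only [Fin.ext_iff] at h0 h3 ⊢
      omega
    rcases hv with rfl | rfl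
    · exact c1
    · exact c2
  have hy0 : ∀ e, 0 ≤ y e := by
    intro e; simp only [hy]; split_ifs <;> norm_num
  have hyle : ∀ e ∉ μ, y e ≤ UUf Γ e := by
    intro e _
    simp only [hy]
    split_ifs with h1 h2 h3
    · rw [UU_of_mem_srcS Γ (hSA_src h1)]
    · rw [UU_of_mem_snkS Γ (hSB_snk h2)]
    · subst h3
      rw [UU_of_mem_midS Γ (midA_mem_midS Γ i0)]
      have : KK ≤ NN Γ := by omega
      exact_mod_cast this
    · exact UU_nonneg Γ e
  have hyμ : ∀ e ∈ μ, y e = 0 := by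
    intro e he
    have h1 : e ∉ SA := fun hc => ((Finset.mem_sdiff.1 (hSA_sub hc)).2) he
    have h2 : e ∉ SB := fun hc => ((Finset.mem_sdiff.1 (hSB_sub hc)).2) he
    have h3 : e ≠ midA Γ i0 := fun hc => hi0 (hc ▸ he)
    simp only [hy]; rw [if_neg h1, if_neg h2, if_neg h3]
  have hval : flowVal (DSTf Γ) 3 y = (KK : ℝ) := by
    rw [flowVal, sum_dst_eq, fil_dst3, hy_snkS]
  rw [payoffF]
  apply le_csSup (payoffF_bddAbove Γ μ (UUf Γ) (fun e => le_refl _))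
  exact ⟨y, hy0, hyle, hyμ, hy_cons, hval.symm⟩

end TightConstruction6
section TightConstruction7

set_option linter.unreachableTactic false
set_option linter.unnecessarySeqFocus false
set_option linter.unusedTactic false

variable (Γ : ℕ)

/-- weighted sums against a distribution: upper bound -/
lemma dist_sum_le {E' : Type} [Fintype E'] [DecidableEq E'] {α : Finset E' → ℝ}
    (hα : IsDist E' Γ α) {f : Finset E' → ℝ} {B : ℝ}
    (hf : ∀ μ ∈ Scenarios E' Γ, f μ ≤ B) :
    ∑ μ ∈ Scenarios E' Γ, α μ * f μ ≤ B := by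
  calc ∑ μ ∈ Scenarios E' Γ, α μ * f μ ≤ ∑ μ ∈ Scenarios E' Γ, α μ * B :=
        Finset.sum_le_sum (fun μ hμ => mul_le_mul_of_nonneg_left (hf μ hμ) (hα.1 μ))
    _ = (∑ μ ∈ Scenarios E' Γ, α μ) * B := by rw [Finset.sum_mul]
    _ = B := by rw [hα.2.2, one_mul]

/-- weighted sums against a distribution: lower bound -/
lemma dist_sum_ge {E' : Type} [Fintype E'] [DecidableEq E'] {α : Finset E' → ℝ}
    (hα : IsDist E' Γ α) {f : Finset E' → ℝ} {B : ℝ}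
    (hf : ∀ μ ∈ Scenarios E' Γ, B ≤ f μ) :
    B ≤ ∑ μ ∈ Scenarios E' Γ, α μ * f μ := by
  calc B = (∑ μ ∈ Scenarios E' Γ, α μ) * B := by rw [hα.2.2, one_mul]
    _ = ∑ μ ∈ Scenarios E' Γ, α μ * B := by rw [Finset.sum_mul]
    _ ≤ ∑ μ ∈ Scenarios E' Γ, α μ * f μ :=
        Finset.sum_le_sum (fun μ hμ => mul_le_mul_of_nonneg_left (hf μ hμ) (hα.1 μ))

lemma scen_card {E' : Type} [Fintype E'] [DecidableEq E'] {μ : Finset E'}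
    (h : μ ∈ Scenarios E' Γ) : μ.card = Γ := (Finset.mem_filter.1 h).2

lemma scen_filter_T :
    (Scenarios (Fin (MM Γ)) Γ).filter (· ∈ Tset Γ) = Tset Γ := by
  ext μ
  rw [Finset.mem_filter]
  exact ⟨fun h => h.2, fun h => ⟨Tset_subset_scen Γ h, h⟩⟩

/-- the path-model value set for a given distribution is bounded above by `NN Γ` -/
lemma pathW_bddAbove {α : Finset (Fin (MM Γ)) → ℝ} (hα : IsDist (Fin (MM Γ)) Γ α) :
    ∀ w ∈ {w : ℝ | ∃ xP : List (Fin (MM Γ)) → ℝ,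
      IsPathFlow (SRCf Γ) (DSTf Γ) (0 : Fin 4) 3 (UUf Γ) xP ∧
      w = ∑ μ ∈ Scenarios (Fin (MM Γ)) Γ, α μ * payoffG (SRCf Γ) (DSTf Γ) (0 : Fin 4) 3 μ xP},
      w ≤ (NN Γ : ℝ) := by
  rintro w ⟨xP, hxP, rfl⟩
  exact dist_sum_le Γ hα (fun μ _ => payoffG_le Γ μ xP hxP)

lemma zero_pathflow : IsPathFlow (SRCf Γ) (DSTf Γ) (0 : Fin 4) 3 (UUf Γ)
    (fun _ => (0 : ℝ)) := by
  refine ⟨fun p => le_refl 0, fun p _ => rfl, fun e => ?_⟩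
  calc (∑ p ∈ stPaths (SRCf Γ) (DSTf Γ) (0 : Fin 4) 3, if e ∈ p then (0:ℝ) else 0) = 0 := by
        apply Finset.sum_eq_zero; intro p _; split_ifs <;> rfl
    _ ≤ UUf Γ e := UU_nonneg Γ e

lemma payoffG_zero (μ : Finset (Fin (MM Γ))) :
    payoffG (SRCf Γ) (DSTf Γ) (0 : Fin 4) 3 μ (fun _ => (0 : ℝ)) = 0 := by
  apply Finset.sum_eq_zero; intro p _; rw [mul_zero]

/-- lower bound for the path-based randomized interdiction value -/
lemma ZRNIPath_ge_one (hΓ : 1 ≤ Γ) :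
    1 ≤ Z_RNIPath (SRCf Γ) (DSTf Γ) (0 : Fin 4) 3 (UUf Γ) Γ := by
  rw [Z_RNIPath]
  apply le_csInf
  · exact ⟨_, αstar Γ, isDist_αstar Γ, rfl⟩
  · rintro z ⟨α, hα, rfl⟩
    have hbdd : BddAbove {w : ℝ | ∃ xP : List (Fin (MM Γ)) → ℝ,
        IsPathFlow (SRCf Γ) (DSTf Γ) (0 : Fin 4) 3 (UUf Γ) xP ∧
        w = ∑ μ ∈ Scenarios (Fin (MM Γ)) Γ,
          α μ * payoffG (SRCf Γ) (DSTf Γ) (0 : Fin 4) 3 μ xP} :=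
      ⟨(NN Γ : ℝ), fun w hw => pathW_bddAbove Γ hα w hw⟩
    have hmem : (∑ μ ∈ Scenarios (Fin (MM Γ)) Γ,
        α μ * payoffG (SRCf Γ) (DSTf Γ) (0 : Fin 4) 3 μ (xPstar Γ hΓ)) ∈ {w : ℝ |
        ∃ xP : List (Fin (MM Γ)) → ℝ,
        IsPathFlow (SRCf Γ) (DSTf Γ) (0 : Fin 4) 3 (UUf Γ) xP ∧
        w = ∑ μ ∈ Scenarios (Fin (MM Γ)) Γ,
          α μ * payoffG (SRCf Γ) (DSTf Γ) (0 : Fin 4) 3 μ xP} :=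
      ⟨xPstar Γ hΓ, isPathFlow_xPstar Γ hΓ, rfl⟩
    refine le_trans ?_ (le_csSup hbdd hmem)
    exact dist_sum_ge Γ hα
      (fun μ hμ => payoffG_xPstar_ge Γ hΓ μ (scen_card Γ hμ))

/-- each value in the path-model outer set is nonnegative -/
lemma pathW_sSup_nonneg {α : Finset (Fin (MM Γ)) → ℝ} (hα : IsDist (Fin (MM Γ)) Γ α) :
    (0 : ℝ) ≤ sSup {w : ℝ | ∃ xP : List (Fin (MM Γ)) → ℝ,
      IsPathFlow (SRCf Γ) (DSTf Γ) (0 : Fin 4) 3 (UUf Γ) xP ∧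
      w = ∑ μ ∈ Scenarios (Fin (MM Γ)) Γ,
        α μ * payoffG (SRCf Γ) (DSTf Γ) (0 : Fin 4) 3 μ xP} := by
  apply le_csSup ⟨(NN Γ : ℝ), fun w hw => pathW_bddAbove Γ hα w hw⟩
  refine ⟨fun _ => 0, zero_pathflow Γ, ?_⟩
  rw [eq_comm]
  apply Finset.sum_eq_zero
  intro μ _
  rw [payoffG_zero, mul_zero]

/-- upper bound for the path-based randomized interdiction value -/
lemma ZRNIPath_le :
    Z_RNIPath (SRCf Γ) (DSTf Γ) (0 : Fin 4) 3 (UUf Γ) Γ ≤ ((Γ : ℝ) + 1)⁻¹ * (NN Γ : ℝ) := by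
  have hc0 : (0 : ℝ) ≤ ((Γ : ℝ) + 1)⁻¹ := by positivity
  have hkey : sSup {w : ℝ | ∃ xP : List (Fin (MM Γ)) → ℝ,
      IsPathFlow (SRCf Γ) (DSTf Γ) (0 : Fin 4) 3 (UUf Γ) xP ∧
      w = ∑ μ ∈ Scenarios (Fin (MM Γ)) Γ,
        αstar Γ μ * payoffG (SRCf Γ) (DSTf Γ) (0 : Fin 4) 3 μ xP}
      ≤ ((Γ : ℝ) + 1)⁻¹ * (NN Γ : ℝ) := by
    apply Real.sSup_le
    · rintro w ⟨xP, hxP, rfl⟩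
      have hstep : ∑ μ ∈ Scenarios (Fin (MM Γ)) Γ,
          αstar Γ μ * payoffG (SRCf Γ) (DSTf Γ) (0 : Fin 4) 3 μ xP
          = ((Γ : ℝ) + 1)⁻¹ * ∑ i : Fin (Γ + 1),
            payoffG (SRCf Γ) (DSTf Γ) (0 : Fin 4) 3 (μiS Γ i) xP := by
        have h1 : ∀ μ ∈ Scenarios (Fin (MM Γ)) Γ,
            αstar Γ μ * payoffG (SRCf Γ) (DSTf Γ) (0 : Fin 4) 3 μ xP
            = if μ ∈ Tset Γ then
                ((Γ : ℝ) + 1)⁻¹ * payoffG (SRCf Γ) (DSTf Γ) (0 : Fin 4) 3 μ xP else 0 := by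
          intro μ _
          rw [αstar]
          split_ifs
          · rfl
          · rw [zero_mul]
        rw [Finset.sum_congr rfl h1, ← Finset.sum_filter, scen_filter_T, Tset,
          Finset.sum_image (fun a _ b _ h => μiS_inj Γ h), ← Finset.mul_sum]
      rw [hstep]
      apply mul_le_mul_of_nonneg_left _ hc0
      -- bound the double sum
      have hswap : ∑ i : Fin (Γ + 1), payoffG (SRCf Γ) (DSTf Γ) (0 : Fin 4) 3 (μiS Γ i) xP
          = ∑ p ∈ stPaths (SRCf Γ) (DSTf Γ) (0 : Fin 4) 3,
            (∑ i : Fin (Γ + 1),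
              max 0 (1 - ((p.countP fun e => decide (e ∈ μiS Γ i)) : ℝ))) * xP p := by
        simp only [payoffG]
        rw [Finset.sum_comm]
        apply Finset.sum_congr rfl
        intro p _
        rw [Finset.sum_mul]
      rw [hswap]
      calc ∑ p ∈ stPaths (SRCf Γ) (DSTf Γ) (0 : Fin 4) 3,
            (∑ i : Fin (Γ + 1),
              max 0 (1 - ((p.countP fun e => decide (e ∈ μiS Γ i)) : ℝ))) * xP p
          ≤ ∑ p ∈ stPaths (SRCf Γ) (DSTf Γ) (0 : Fin 4) 3, xP p := by
            apply Finset.sum_le_sum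
            intro p hp
            calc (∑ i : Fin (Γ + 1),
                max 0 (1 - ((p.countP fun e => decide (e ∈ μiS Γ i)) : ℝ))) * xP p
                ≤ 1 * xP p :=
                  mul_le_mul_of_nonneg_right (sum_max_le Γ p hp) (hxP.1 p)
              _ = xP p := one_mul _
        _ ≤ (NN Γ : ℝ) := tot_path_le Γ xP hxP
    · positivity
  rw [Z_RNIPath]
  refine le_trans (csInf_le ?_ ⟨αstar Γ, isDist_αstar Γ, rfl⟩) hkey
  exact ⟨0, fun z hz => by
    obtain ⟨α, hα, rfl⟩ := hz
    exact pathW_sSup_nonneg Γ hα⟩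

/-- lower bound for the arc-based randomized interdiction value -/
lemma ZRNI_ge :
    ((NN Γ - Γ : ℕ) : ℝ) ≤ Z_RNI (SRCf Γ) (DSTf Γ) (0 : Fin 4) 3 (UUf Γ) Γ := by
  rw [Z_RNI]
  apply le_csInf
  · exact ⟨_, αstar Γ, isDist_αstar Γ, rfl⟩
  · rintro z ⟨α, hα, rfl⟩
    have hbdd : BddAbove {w : ℝ | ∃ x : Fin (MM Γ) → ℝ,
        IsFlow (SRCf Γ) (DSTf Γ) (0 : Fin 4) 3 (UUf Γ) x ∧
        w = ∑ μ ∈ Scenarios (Fin (MM Γ)) Γ,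
          α μ * payoffF (SRCf Γ) (DSTf Γ) (0 : Fin 4) 3 μ x} := by
      refine ⟨(NN Γ : ℝ), ?_⟩
      rintro w ⟨x, hx, rfl⟩
      exact dist_sum_le Γ hα (fun μ _ => payoffF_le Γ μ x hx.2.1)
    have hmem : (∑ μ ∈ Scenarios (Fin (MM Γ)) Γ,
        α μ * payoffF (SRCf Γ) (DSTf Γ) (0 : Fin 4) 3 μ (UUf Γ)) ∈ {w : ℝ |
        ∃ x : Fin (MM Γ) → ℝ,
        IsFlow (SRCf Γ) (DSTf Γ) (0 : Fin 4) 3 (UUf Γ) x ∧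
        w = ∑ μ ∈ Scenarios (Fin (MM Γ)) Γ,
          α μ * payoffF (SRCf Γ) (DSTf Γ) (0 : Fin 4) 3 μ x} :=
      ⟨UUf Γ, IsFlow_UU Γ, rfl⟩
    refine le_trans ?_ (le_csSup hbdd hmem)
    exact dist_sum_ge Γ hα (fun μ hμ => payoffF_UU_ge Γ μ (scen_card Γ hμ))

end TightConstruction7
/-- tightness of the factor `Γ`: for every `Γ ≥ 1` and `ε > 0` there is
a network with `Z_RNI^Path > 0` and `Z_RNI ≥ (Γ-ε)·Z_RNI^Path`. -/
theorem tight_Gamma (Γ : ℕ) (hΓ1 : 1 ≤ Γ) (ε : ℝ) (hε : 0 < ε) :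
    ∃ (n m : ℕ) (src dst : Fin m → Fin n) (s t : Fin n) (u : Fin m → ℝ),
      IsNetwork src dst s t u ∧ Γ ≤ m ∧
      0 < Z_RNIPath src dst s t u Γ ∧
      ((Γ : ℝ) - ε) * Z_RNIPath src dst s t u Γ ≤ Z_RNI src dst s t u Γ := by
  have hZP1 := ZRNIPath_ge_one Γ hΓ1
  have hZP0 : 0 < Z_RNIPath (SRCf Γ) (DSTf Γ) (0 : Fin 4) 3 (UUf Γ) Γ :=
    lt_of_lt_of_le one_pos hZP1
  have hub := ZRNIPath_le Γ
  have hlb := ZRNI_ge Γ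
  have hΓN : Γ ≤ NN Γ := by
    simp only [NN]; nlinarith
  have hK : ((NN Γ - Γ : ℕ) : ℝ) = (Γ : ℝ) * (Γ : ℝ) := by
    rw [Nat.cast_sub hΓN]
    simp only [NN]; push_cast; ring
  refine ⟨4, MM Γ, SRCf Γ, DSTf Γ, 0, 3, UUf Γ, IsNetwork_tc Γ, ?_, hZP0, ?_⟩
  · simp only [MM]; omega
  · rcases le_or_gt ((Γ : ℝ) - ε) 0 with h | h
    · have h1 : ((Γ : ℝ) - ε) * Z_RNIPath (SRCf Γ) (DSTf Γ) (0 : Fin 4) 3 (UUf Γ) Γ ≤ 0 :=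
        mul_nonpos_iff.2 (Or.inr ⟨h, hZP0.le⟩)
      refine le_trans h1 (le_trans ?_ hlb)
      rw [hK]; positivity
    · calc ((Γ : ℝ) - ε) * Z_RNIPath (SRCf Γ) (DSTf Γ) (0 : Fin 4) 3 (UUf Γ) Γ
          ≤ ((Γ : ℝ) - ε) * (((Γ : ℝ) + 1)⁻¹ * (NN Γ : ℝ)) :=
            mul_le_mul_of_nonneg_left hub h.le
        _ ≤ ((NN Γ - Γ : ℕ) : ℝ) := by
            rw [hK]
            have hNN : (NN Γ : ℝ) = (Γ : ℝ) * ((Γ : ℝ) + 1) := by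
              simp only [NN]; push_cast; ring
            rw [hNN]
            have hg : (0 : ℝ) < (Γ : ℝ) + 1 := by positivity
            have hsimp : ((Γ : ℝ) + 1)⁻¹ * ((Γ : ℝ) * ((Γ : ℝ) + 1)) = (Γ : ℝ) := by
              field_simp
            rw [hsimp]
            have hγ0 : (0 : ℝ) ≤ (Γ : ℝ) := Nat.cast_nonneg _
            nlinarith
        _ ≤ Z_RNI (SRCf Γ) (DSTf Γ) (0 : Fin 4) 3 (UUf Γ) Γ := hlb

end NetworkInterdiction
end
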